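/- arXiv:2405.17094 — 13 statements merged into one kernel-verified Lean document; each statement's English description precedes it below -/
import Mathlib

section
/- Let β̂ be a minimizer of β ↦ f(β) + λ‖β‖_sgl over ℝ^p, where f : ℝ^p → ℝ is convex and differentiable and λ > 0. Then for every group g ∈ {1,…,m}: (i) if β̂^{(g)} = 0, then ⟨∇_g f(β̂), x⟩ ≤ λ(α‖x‖₁ + (1−α)√p_g‖x‖₂) for all x ∈ ℝ^{p_g}; (ii) conversely, if ⟨∇_g f(β̂), x⟩ < λ(α‖x‖₁ + (1−α)√p_g‖x‖₂) for all nonzero x ∈ ℝ^{p_g}, then β̂^{(g)} = 0. (This is the precise form of the theoretical SGL group screening rule: a group is inactive exactly when the ε_g-norm of ∇_g f(β̂) is at most τ_g λ, the strict inequality certifying inactivity.) -/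
open scoped BigOperators

noncomputable def sglNorm {p m : ℕ} (G : Fin m → Finset (Fin p)) (α : ℝ)
    (β : Fin p → ℝ) : ℝ :=
  α * ∑ i, |β i| +
    (1 - α) * ∑ g, Real.sqrt ((G g).card) * Real.sqrt (∑ i ∈ G g, (β i) ^ 2)

/-- The ℓ¹-ℓ² combination `α‖x‖₁ + (1-α)√p_g‖x‖₂` restricted to a group `s`. -/
noncomputable def groupNorm {p : ℕ} (s : Finset (Fin p)) (α : ℝ) (x : Fin p → ℝ) : ℝ :=
  α * ∑ i ∈ s, |x i| + (1 - α) * Real.sqrt s.card * Real.sqrt (∑ i ∈ s, (x i) ^ 2)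

lemma groupNorm_congr {p : ℕ} (s : Finset (Fin p)) (α : ℝ) {x y : Fin p → ℝ}
    (h : ∀ i ∈ s, x i = y i) : groupNorm s α x = groupNorm s α y := by
  have e1 : ∑ i ∈ s, |x i| = ∑ i ∈ s, |y i| :=
    Finset.sum_congr rfl fun i hi => by rw [h i hi]
  have e2 : ∑ i ∈ s, (x i) ^ 2 = ∑ i ∈ s, (y i) ^ 2 :=
    Finset.sum_congr rfl fun i hi => by rw [h i hi]
  unfold groupNorm
  rw [e1, e2]

lemma groupNorm_smul {p : ℕ} (s : Finset (Fin p)) (α c : ℝ) (x : Fin p → ℝ) :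
    groupNorm s α (c • x) = |c| * groupNorm s α x := by
  unfold groupNorm
  have h1 : ∑ i ∈ s, |(c • x) i| = |c| * ∑ i ∈ s, |x i| := by
    rw [Finset.mul_sum]
    exact Finset.sum_congr rfl fun i _ => by simp [abs_mul]
  have h2 : Real.sqrt (∑ i ∈ s, ((c • x) i) ^ 2)
      = |c| * Real.sqrt (∑ i ∈ s, (x i) ^ 2) := by
    have he : ∑ i ∈ s, ((c • x) i) ^ 2 = c ^ 2 * ∑ i ∈ s, (x i) ^ 2 := by
      rw [Finset.mul_sum]
      exact Finset.sum_congr rfl fun i _ => by simp [mul_pow]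
    rw [he, Real.sqrt_mul (sq_nonneg c), Real.sqrt_sq_eq_abs]
  rw [h1, h2]; ring

lemma sglNorm_diff {p m : ℕ} (G : Fin m → Finset (Fin p))
    (hpart : ∀ i : Fin p, ∃! g : Fin m, i ∈ G g) (α : ℝ) (g : Fin m)
    (β β' : Fin p → ℝ) (h : ∀ i ∉ G g, β' i = β i) :
    sglNorm G α β' = sglNorm G α β + (groupNorm (G g) α β' - groupNorm (G g) α β) := by
  have hdisj : ∀ h' : Fin m, h' ≠ g → ∀ i ∈ G h', i ∉ G g := by
    intro h' hne i hih' hig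
    exact hne ((hpart i).unique hih' hig)
  have l1 : ∀ γ : Fin p → ℝ,
      ∑ i, |γ i| = ∑ i ∈ G g, |γ i| + ∑ i ∈ Finset.univ \ G g, |γ i| := by
    intro γ
    rw [add_comm, Finset.sum_sdiff (Finset.subset_univ _)]
  have l1' : ∑ i ∈ Finset.univ \ G g, |β' i| = ∑ i ∈ Finset.univ \ G g, |β i| :=
    Finset.sum_congr rfl fun i hi => by rw [h i (Finset.mem_sdiff.mp hi).2]
  have l2 : ∀ γ : Fin p → ℝ,
      ∑ h', Real.sqrt ((G h').card) * Real.sqrt (∑ i ∈ G h', (γ i) ^ 2)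
        = Real.sqrt ((G g).card) * Real.sqrt (∑ i ∈ G g, (γ i) ^ 2)
          + ∑ h' ∈ Finset.univ.erase g,
              Real.sqrt ((G h').card) * Real.sqrt (∑ i ∈ G h', (γ i) ^ 2) := by
    intro γ
    rw [← Finset.add_sum_erase _ _ (Finset.mem_univ g)]
  have l2' : ∑ h' ∈ Finset.univ.erase g,
        Real.sqrt ((G h').card) * Real.sqrt (∑ i ∈ G h', (β' i) ^ 2)
      = ∑ h' ∈ Finset.univ.erase g,
          Real.sqrt ((G h').card) * Real.sqrt (∑ i ∈ G h', (β i) ^ 2) :=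
    Finset.sum_congr rfl fun h' hh' => by
      have : ∑ i ∈ G h', (β' i) ^ 2 = ∑ i ∈ G h', (β i) ^ 2 :=
        Finset.sum_congr rfl fun i hi => by
          rw [h i (hdisj h' (Finset.ne_of_mem_erase hh') i hi)]
      rw [this]
  unfold sglNorm groupNorm
  rw [l1 β', l1 β, l1', l2 β', l2 β, l2']
  ring

lemma dir_deriv_ge {p : ℕ} (f : (Fin p → ℝ) → ℝ) (hdiff : Differentiable ℝ f)
    (β v : Fin p → ℝ) (C : ℝ)
    (h : ∀ t : ℝ, 0 < t → t ≤ 1 → t * C ≤ f (β + t • v) - f β) :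
    C ≤ fderiv ℝ f β v := by
  have hline : HasDerivAt (fun t : ℝ => β + t • v) v 0 := by
    simpa using ((hasDerivAt_id (0 : ℝ)).smul_const v).const_add β
  have hcomp : HasDerivAt (fun t : ℝ => f (β + t • v)) (fderiv ℝ f β v) 0 := by
    have h1 := (hdiff (β + (0 : ℝ) • v)).hasFDerivAt
    have h2 := h1.comp_hasDerivAt 0 hline
    simp only [zero_smul, add_zero] at h2
    exact h2
  rw [hasDerivAt_iff_tendsto_slope] at hcomp
  have hsub : Filter.Tendsto (slope (fun t : ℝ => f (β + t • v)) 0)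
      (nhdsWithin 0 (Set.Ioi 0)) (nhds (fderiv ℝ f β v)) :=
    hcomp.mono_left (nhdsWithin_mono _ (fun t ht => ne_of_gt ht))
  refine ge_of_tendsto hsub ?_
  filter_upwards [Ioc_mem_nhdsGT_of_mem (by constructor <;> norm_num :
      (0 : ℝ) ∈ Set.Ico (0 : ℝ) 1)] with t ht
  have ht0 : (0 : ℝ) < t := ht.1
  have hbound := h t ht0 ht.2
  have hslope : slope (fun t : ℝ => f (β + t • v)) 0 t
      = (f (β + t • v) - f β) / t := by
    rw [slope_def_field]
    simp
  rw [hslope, le_div_iff₀ ht0]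
  linarith

/-- Theoretical SGL group screening: a group is inactive exactly when the dual pairing of
`∇_g f(β̂)` is dominated by `λ` times the group norm. -/
theorem sgl_theoretical_group_screening
    {p m : ℕ} (G : Fin m → Finset (Fin p))
    (hpart : ∀ i : Fin p, ∃! g : Fin m, i ∈ G g)
    (α : ℝ) (hα : α ∈ Set.Icc (0:ℝ) 1)
    (f : (Fin p → ℝ) → ℝ)
    (hconv : ConvexOn ℝ Set.univ f) (hdiff : Differentiable ℝ f)
    (lam : ℝ) (hlam : 0 < lam)
    (βhat : Fin p → ℝ)
    (hmin : ∀ b : Fin p → ℝ,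
      f βhat + lam * sglNorm G α βhat ≤ f b + lam * sglNorm G α b)
    (g : Fin m) :
    ((∀ i ∈ G g, βhat i = 0) →
      ∀ x : Fin p → ℝ, (∀ i ∉ G g, x i = 0) →
        fderiv ℝ f βhat x ≤ lam * groupNorm (G g) α x) ∧
    ((∀ x : Fin p → ℝ, (∀ i ∉ G g, x i = 0) → x ≠ 0 →
        fderiv ℝ f βhat x < lam * groupNorm (G g) α x) →
      ∀ i ∈ G g, βhat i = 0) := by
  constructor
  · intro h0 x hx
    have key : -(lam * groupNorm (G g) α x) ≤ fderiv ℝ f βhat (-x) := by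
      apply dir_deriv_ge f hdiff
      intro t ht0 ht1
      have hN : sglNorm G α (βhat + t • (-x))
          = sglNorm G α βhat + t * groupNorm (G g) α x := by
        rw [sglNorm_diff G hpart α g βhat _ (fun i hi => by simp [hx i hi])]
        have e1 : groupNorm (G g) α (βhat + t • (-x))
            = t * groupNorm (G g) α x := by
          rw [groupNorm_congr (G g) α (y := (-t) • x)
            (fun i hi => by simp [h0 i hi]), groupNorm_smul,
            abs_of_nonpos (by linarith), neg_neg]
        have e2 : groupNorm (G g) α βhat = 0 := by
          rw [groupNorm_congr (G g) α (y := (0 : Fin p → ℝ))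
            (fun i hi => by simp [h0 i hi])]
          simp [groupNorm]
        rw [e1, e2]; ring
      have hmin' := hmin (βhat + t • (-x))
      rw [hN] at hmin'
      nlinarith
    have hneg := (fderiv ℝ f βhat).map_neg x
    linarith
  · intro hstrict i hi
    by_contra hne
    set x : Fin p → ℝ := fun j => if j ∈ G g then βhat j else 0 with hxdef
    have hxsupp : ∀ j, j ∉ G g → x j = 0 := fun j hj => if_neg hj
    have hxg : ∀ j ∈ G g, x j = βhat j := fun j hj => if_pos hj
    have hxne : x ≠ 0 := by
      intro h0
      apply hne
      have := congrFun h0 i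
      simpa [hxdef, hi] using this
    have key : lam * groupNorm (G g) α x ≤ fderiv ℝ f βhat (-x) := by
      apply dir_deriv_ge f hdiff
      intro t ht0 ht1
      have hN : sglNorm G α (βhat + t • (-x))
          = sglNorm G α βhat + (-t) * groupNorm (G g) α x := by
        rw [sglNorm_diff G hpart α g βhat _ (fun j hj => by simp [hxsupp j hj])]
        have e1 : groupNorm (G g) α (βhat + t • (-x))
            = (1 - t) * groupNorm (G g) α x := by
          rw [groupNorm_congr (G g) α (y := (1 - t) • x)
            (fun j hj => by simp [hxg j hj]; ring), groupNorm_smul,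
            abs_of_nonneg (by linarith)]
        have e2 : groupNorm (G g) α βhat = groupNorm (G g) α x :=
          groupNorm_congr (G g) α (fun j hj => (hxg j hj).symm)
        rw [e1, e2]; ring
      have hmin' := hmin (βhat + t • (-x))
      rw [hN] at hmin'
      nlinarith
    have hs := hstrict (-x) (fun j hj => by simp [hxsupp j hj])
      (by simpa using hxne)
    have hgn : groupNorm (G g) α (-x) = groupNorm (G g) α x := by
      have h := groupNorm_smul (G g) α (-1) x
      simpa using h
    have hneg := (fderiv ℝ f βhat).map_neg x
    rw [hgn] at hs
    linarith
end

section
/- (DFR-SGL group screening.) Let f : ℝ^p → ℝ be convex and differentiable, let λ_k ≥ λ_{k+1} > 0, and let β̂(λ_k) and β̂(λ_{k+1}) be minimizers of β ↦ f(β) + λ‖β‖_sgl at λ = λ_k and λ = λ_{k+1} respectively. Fix a group g and assume the Lipschitz condition: for all x ∈ ℝ^{p_g}, ⟨∇_g f(β̂(λ_{k+1})) − ∇_g f(β̂(λ_k)), x⟩ ≤ (λ_k − λ_{k+1})(α‖x‖₁ + (1−α)√p_g‖x‖₂). If ⟨∇_g f(β̂(λ_k)), x⟩ < (2λ_{k+1}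 − λ_k)(α‖x‖₁ + (1−α)√p_g‖x‖₂) for all nonzero x ∈ ℝ^{p_g}, then β̂^{(g)}(λ_{k+1}) = 0; i.e., every group discarded by the screening rule is inactive at λ_{k+1}. -/
open scoped BigOperators

/-- DFR-SGL group screening: under the Lipschitz condition, every group discarded by the
strong screening rule is inactive at `λ_{k+1}`. -/
theorem dfr_sgl_group_screening
    {p m : ℕ} (G : Fin m → Finset (Fin p))
    (hpart : ∀ i : Fin p, ∃! g : Fin m, i ∈ G g)
    (α : ℝ) (hα : α ∈ Set.Icc (0:ℝ) 1)
    (f : (Fin p → ℝ) → ℝ)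
    (hconv : ConvexOn ℝ Set.univ f) (hdiff : Differentiable ℝ f)
    (lamk lamk1 : ℝ) (hord : lamk1 ≤ lamk) (hpos : 0 < lamk1)
    (βk βk1 : Fin p → ℝ)
    (hmink : ∀ b : Fin p → ℝ,
      f βk + lamk * sglNorm G α βk ≤ f b + lamk * sglNorm G α b)
    (hmink1 : ∀ b : Fin p → ℝ,
      f βk1 + lamk1 * sglNorm G α βk1 ≤ f b + lamk1 * sglNorm G α b)
    (g : Fin m)
    (hlip : ∀ x : Fin p → ℝ, (∀ i ∉ G g, x i = 0) →
      fderiv ℝ f βk1 x - fderiv ℝ f βk x ≤ (lamk - lamk1) * groupNorm (G g) α x)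
    (hscreen : ∀ x : Fin p → ℝ, (∀ i ∉ G g, x i = 0) → x ≠ 0 →
      fderiv ℝ f βk x < (2 * lamk1 - lamk) * groupNorm (G g) α x) :
    ∀ i ∈ G g, βk1 i = 0 := by

  intro i0 hi0
  by_contra hne
  classical
  set x : Fin p → ℝ := fun j => if j ∈ G g then βk1 j else 0 with hxdef
  have hxg : ∀ j ∈ G g, x j = βk1 j := fun j hj => by simp [hxdef, hj]
  have hxsupp : ∀ j, j ∉ G g → x j = 0 := fun j hj => by simp [hxdef, hj]
  have hxne : x ≠ 0 := by
    intro h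
    apply hne
    have h0 := congrFun h i0
    simpa [hxdef, hi0] using h0
  have hdisj : ∀ h : Fin m, h ≠ g → ∀ j ∈ G h, x j = 0 := by
    intro h hh j hj
    apply hxsupp
    intro hjg
    exact hh ((hpart j).unique hj hjg)
  set S := Real.sqrt (∑ j ∈ G g, (βk1 j) ^ 2) with hS
  set Gx := groupNorm (G g) α x with hGx
  have hnorm : ∀ t : ℝ, 0 ≤ t → t ≤ 1 →
      sglNorm G α (βk1 - t • x) = sglNorm G α βk1 - t * Gx := by
    intro t ht0 ht1
    have h1t : (0:ℝ) ≤ 1 - t := by linarith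
    have hA : ∑ j, |βk1 j - t * x j|
        = (∑ j, |βk1 j|) - t * ∑ j ∈ G g, |x j| := by
      have hpt : ∀ j : Fin p, |βk1 j - t * x j|
          = |βk1 j| - t * (if j ∈ G g then |x j| else 0) := by
        intro j
        by_cases hj : j ∈ G g
        · simp only [hj, if_true, hxg j hj]
          have he : βk1 j - t * βk1 j = (1 - t) * βk1 j := by ring
          rw [he, abs_mul, abs_of_nonneg h1t]; ring
        · simp [hxsupp j hj, hj]
      simp only [hpt]
      rw [Finset.sum_sub_distrib, ← Finset.mul_sum]
      congr 2
      rw [Finset.sum_ite_mem, Finset.univ_inter]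
    have hB : ∑ h, Real.sqrt ((G h).card) * Real.sqrt (∑ j ∈ G h, (βk1 j - t * x j) ^ 2)
        = (∑ h, Real.sqrt ((G h).card) * Real.sqrt (∑ j ∈ G h, (βk1 j) ^ 2))
          - t * (Real.sqrt ((G g).card) * S) := by
      have key : ∀ h : Fin m,
          Real.sqrt ((G h).card) * Real.sqrt (∑ j ∈ G h, (βk1 j - t * x j) ^ 2)
          = Real.sqrt ((G h).card) * Real.sqrt (∑ j ∈ G h, (βk1 j) ^ 2)
            - (if h = g then t * (Real.sqrt ((G g).card) * S) else 0) := by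
        intro h
        by_cases hh : h = g
        · subst hh
          have he : ∑ j ∈ G h, (βk1 j - t * x j) ^ 2
              = (1 - t) ^ 2 * ∑ j ∈ G h, (βk1 j) ^ 2 := by
            rw [Finset.mul_sum]
            refine Finset.sum_congr rfl fun j hj => ?_
            rw [hxg j hj]; ring
          rw [he, Real.sqrt_mul (by positivity), Real.sqrt_sq h1t]
          simp only [if_true, hS]
          ring
        · have he : ∀ j ∈ G h, (βk1 j - t * x j) ^ 2 = (βk1 j) ^ 2 := fun j hj => by
            rw [hdisj h hh j hj]; ring
          rw [Finset.sum_congr rfl he]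
          simp [hh]
      simp only [key]
      rw [Finset.sum_sub_distrib]
      congr 1
      simp
    have hGxval : Gx = α * ∑ j ∈ G g, |x j| + (1 - α) * (Real.sqrt ((G g).card) * S) := by
      rw [hGx, groupNorm]
      have he : ∑ j ∈ G g, (x j) ^ 2 = ∑ j ∈ G g, (βk1 j) ^ 2 :=
        Finset.sum_congr rfl fun j hj => by rw [hxg j hj]
      rw [he, ← hS]; ring
    simp only [sglNorm, Pi.sub_apply, Pi.smul_apply, smul_eq_mul]
    rw [hA, hB, hGxval]; ring
  have hline : HasDerivAt (fun t : ℝ => f (βk1 - t • x)) (-(fderiv ℝ f βk1 x)) 0 := by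
    have h := (hdiff βk1).hasFDerivAt.hasLineDerivAt (-x)
    unfold HasLineDerivAt at h
    have heq : (fun t : ℝ => f (βk1 + t • (-x))) = fun t : ℝ => f (βk1 - t • x) := by
      funext t; rw [smul_neg, ← sub_eq_add_neg]
    rw [heq] at h
    simpa using h
  have hslope : ∀ t : ℝ, 0 < t → t ≤ 1 →
      lamk1 * Gx ≤ (f (βk1 - t • x) - f βk1) / t := by
    intro t ht0 ht1
    have hm := hmink1 (βk1 - t • x)
    rw [hnorm t ht0.le ht1] at hm
    rw [le_div_iff₀ ht0]
    nlinarith [hm]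
  have hlim : Filter.Tendsto (fun t : ℝ => (f (βk1 - t • x) - f βk1) / t)
      (nhdsWithin 0 (Set.Ioi 0)) (nhds (-(fderiv ℝ f βk1 x))) := by
    have ht := hasDerivAt_iff_tendsto_slope.mp hline
    have hmono : nhdsWithin (0:ℝ) (Set.Ioi 0) ≤ nhdsWithin 0 {(0:ℝ)}ᶜ :=
      nhdsWithin_mono 0 (fun y hy => ne_of_gt hy)
    refine (ht.mono_left hmono).congr fun t => ?_
    simp [slope_def_field, div_eq_inv_mul]
  have hkey : lamk1 * Gx ≤ -(fderiv ℝ f βk1 x) := by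
    refine ge_of_tendsto hlim ?_
    filter_upwards [Ioc_mem_nhdsGT_of_mem (Set.mem_Ico.mpr ⟨le_refl 0, one_pos⟩)] with t ht
    exact hslope t ht.1 ht.2
  have hGneg : groupNorm (G g) α (-x) = Gx := by
    simp [groupNorm, hGx]
  have h1 := hlip (-x) (fun j hj => by simp [hxsupp j hj])
  have h2 := hscreen (-x) (fun j hj => by simp [hxsupp j hj]) (neg_ne_zero.mpr hxne)
  rw [hGneg] at h1 h2
  simp only [map_neg] at h1 h2
  linarith
end

section
/- (Theoretical SGL variable screening.) Let β̂ be a minimizer of β ↦ f(β) + λ‖β‖_sgl over ℝ^p, where f : ℝ^p → ℝ is convex and differentiable and λ > 0. Let g be a group with β̂^{(g)} ≠ 0 and let i ∈ G_g. Then: (i) if β̂_i = 0, then |∇_i f(β̂)| ≤ λα; (ii) if moreover α < 1, then β̂_i ≠ 0 implies |∇_i f(β̂)| > λα. Hence for α < 1, within an active group, variable i is active if and only if |∇_i f(β̂)| > λα. -/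
open scoped BigOperators

open Filter in
/-- If `Φ` has derivative `D` at `0` and `Φ 0 ≤ Φ t + C * |t|` for all `t`, then `|D| ≤ C`. -/
lemma abs_deriv_le_of_min {Φ : ℝ → ℝ} {D C : ℝ} (hD : HasDerivAt Φ D 0)
    (h : ∀ t : ℝ, Φ 0 ≤ Φ t + C * |t|) : |D| ≤ C := by
  have hslope := hasDerivAt_iff_tendsto_slope.1 hD
  rw [abs_le]
  constructor
  · -- from the right: slope ≥ -C
    have hright : Filter.Tendsto (slope Φ 0) (nhdsWithin 0 (Set.Ioi 0)) (nhds D) :=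
      hslope.mono_left (nhdsWithin_mono _ (fun t ht => by
        simp only [Set.mem_compl_iff, Set.mem_singleton_iff]
        exact ne_of_gt ht))
    refine ge_of_tendsto hright ?_
    filter_upwards [self_mem_nhdsWithin] with t ht
    have ht0 : (0:ℝ) < t := ht
    have hmin := h t
    rw [abs_of_pos ht0] at hmin
    rw [slope_def_field, show t - 0 = t by ring, le_div_iff₀ ht0]
    linarith
  · -- from the left: slope ≤ C
    have hleft : Filter.Tendsto (slope Φ 0) (nhdsWithin 0 (Set.Iio 0)) (nhds D) :=
      hslope.mono_left (nhdsWithin_mono _ (fun t ht => by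
        simp only [Set.mem_compl_iff, Set.mem_singleton_iff]
        exact ne_of_lt ht))
    refine le_of_tendsto hleft ?_
    filter_upwards [self_mem_nhdsWithin] with t ht
    have ht0 : t < 0 := ht
    have hmin := h t
    rw [abs_of_neg ht0] at hmin
    rw [slope_def_field]
    have heq : (Φ t - Φ 0) / (t - 0) = (Φ 0 - Φ t) / (-t) := by
      rw [div_eq_div_iff (by linarith) (by linarith)]; ring
    rw [heq, div_le_iff₀ (by linarith : (0:ℝ) < -t)]
    linarith

/-- Theoretical SGL variable screening: within an active group, for `α < 1`,
variable `i` is active iff `|∇_i f(β̂)| > λα`. -/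
theorem sgl_theoretical_variable_screening
    {p m : ℕ} (G : Fin m → Finset (Fin p))
    (hpart : ∀ i : Fin p, ∃! g : Fin m, i ∈ G g)
    (α : ℝ) (hα : α ∈ Set.Icc (0:ℝ) 1)
    (f : (Fin p → ℝ) → ℝ)
    (hconv : ConvexOn ℝ Set.univ f) (hdiff : Differentiable ℝ f)
    (lam : ℝ) (hlam : 0 < lam)
    (βhat : Fin p → ℝ)
    (hmin : ∀ b : Fin p → ℝ,
      f βhat + lam * sglNorm G α βhat ≤ f b + lam * sglNorm G α b)
    (g : Fin m) (hactive : ∃ j ∈ G g, βhat j ≠ 0)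
    (i : Fin p) (hi : i ∈ G g) :
    (βhat i = 0 → |fderiv ℝ f βhat (Pi.single i 1)| ≤ lam * α) ∧
    (α < 1 → βhat i ≠ 0 → lam * α < |fderiv ℝ f βhat (Pi.single i 1)|) := by
  obtain ⟨hα0, hα1⟩ := hα
  set v : Fin p → ℝ := Pi.single i 1 with hv
  set x := βhat i with hx
  set c : ℝ := ((G g).card : ℝ) with hc
  set S' : ℝ := ∑ j ∈ (G g).erase i, (βhat j)^2 with hS'
  set D : ℝ := fderiv ℝ f βhat (Pi.single i 1) with hD
  have hS'nonneg : 0 ≤ S' := Finset.sum_nonneg fun j _ => sq_nonneg _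
  have hcpos : 0 < Real.sqrt c := by
    rw [hc]
    apply Real.sqrt_pos.2
    exact_mod_cast Finset.card_pos.2 ⟨i, hi⟩
  -- values of the perturbed vector
  have hbval : ∀ (t : ℝ) (j : Fin p), (βhat + t • v) j = βhat j + t * (if j = i then 1 else 0) := by
    intro t j
    simp [hv, Pi.single_apply]
  -- decomposition of the SGL norm along the perturbation
  have hdec : ∀ t : ℝ, sglNorm G α (βhat + t • v) =
      (α * ∑ j ∈ Finset.univ.erase i, |βhat j| +
        (1-α) * ∑ g' ∈ Finset.univ.erase g,
          Real.sqrt ((G g').card) * Real.sqrt (∑ j ∈ G g', (βhat j)^2))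
      + (α * |x + t| + (1-α) * (Real.sqrt c * Real.sqrt ((x + t)^2 + S'))) := by
    intro t
    have h1 : ∑ j, |(βhat + t • v) j| = |x + t| + ∑ j ∈ Finset.univ.erase i, |βhat j| := by
      rw [← Finset.add_sum_erase _ _ (Finset.mem_univ i)]
      congr 1
      · rw [hbval t i]; simp [hx]
      · apply Finset.sum_congr rfl
        intro j hj
        rw [hbval t j, if_neg (Finset.ne_of_mem_erase hj)]
        ring_nf
    have h2 : ∀ g' : Fin m, g' ≠ g → ∑ j ∈ G g', ((βhat + t • v) j)^2 = ∑ j ∈ G g', (βhat j)^2 := by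
      intro g' hg'
      apply Finset.sum_congr rfl
      intro j hj
      have hji : j ≠ i := by
        intro h; subst h
        exact hg' ((hpart j).unique hj hi)
      rw [hbval t j, if_neg hji]
      ring_nf
    have h3 : ∑ j ∈ G g, ((βhat + t • v) j)^2 = (x + t)^2 + S' := by
      rw [← Finset.add_sum_erase _ _ hi]
      congr 1
      · rw [hbval t i]; simp [hx]
      · apply Finset.sum_congr rfl
        intro j hj
        rw [hbval t j, if_neg (Finset.ne_of_mem_erase hj)]
        ring_nf
    have h4 : ∑ g', Real.sqrt ((G g').card) * Real.sqrt (∑ j ∈ G g', ((βhat + t • v) j)^2)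
        = Real.sqrt c * Real.sqrt ((x + t)^2 + S')
          + ∑ g' ∈ Finset.univ.erase g,
            Real.sqrt ((G g').card) * Real.sqrt (∑ j ∈ G g', (βhat j)^2) := by
      rw [← Finset.add_sum_erase _ _ (Finset.mem_univ g)]
      congr 1
      · rw [h3]
      · apply Finset.sum_congr rfl
        intro g' hg'
        rw [h2 g' (Finset.ne_of_mem_erase hg')]
    rw [sglNorm, h1, h4]
    ring
  have hb0 : βhat + (0:ℝ) • v = βhat := by simp
  -- the one-dimensional minimization
  have hΨ : ∀ t : ℝ,
      f βhat + lam * α * |x| + lam * (1-α) * (Real.sqrt c * Real.sqrt (x^2 + S')) ≤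
      f (βhat + t • v) + lam * α * |x + t|
        + lam * (1-α) * (Real.sqrt c * Real.sqrt ((x + t)^2 + S')) := by
    intro t
    have := hmin (βhat + t • v)
    rw [hdec t] at this
    have h0 := hdec 0
    rw [hb0] at h0
    rw [h0] at this
    simp only [add_zero] at this
    nlinarith [this]
  -- derivative of t ↦ f (βhat + t • v)
  have hcurve : HasDerivAt (fun t : ℝ => βhat + t • v) v 0 := by
    simpa using ((hasDerivAt_id (0:ℝ)).smul_const v).const_add βhat
  have hF : HasDerivAt (fun t : ℝ => f (βhat + t • v)) D 0 := by
    have hf' : HasFDerivAt f (fderiv ℝ f βhat) ((fun t : ℝ => βhat + t • v) 0) := by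
      rw [show (fun t : ℝ => βhat + t • v) 0 = βhat by simp]
      exact (hdiff βhat).hasFDerivAt
    exact hf'.comp_hasDerivAt 0 hcurve
  constructor
  · -- part (i)
    intro hxi
    have hx0 : x = 0 := hxi
    -- S' > 0
    obtain ⟨j, hj, hjne⟩ := hactive
    have hji : j ≠ i := fun h => hjne (h ▸ hxi)
    have hS'pos : 0 < S' := by
      rw [hS']
      have hmem : j ∈ (G g).erase i := Finset.mem_erase.2 ⟨hji, hj⟩
      have hle := Finset.single_le_sum (f := fun j => (βhat j)^2)
        (fun k _ => sq_nonneg (βhat k)) hmem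
      have hpos : 0 < (βhat j)^2 :=
        lt_of_le_of_ne (sq_nonneg _) (Ne.symm (pow_ne_zero 2 hjne))
      linarith
    -- derivative of the smooth part
    have hu : HasDerivAt (fun t : ℝ => t^2 + S') 0 0 := by
      simpa using ((hasDerivAt_id (0:ℝ)).pow 2).add_const S'
    have hB : HasDerivAt (fun t : ℝ => Real.sqrt (t^2 + S')) 0 0 := by
      have hsq : HasDerivAt Real.sqrt (1 / (2 * Real.sqrt ((fun t : ℝ => t^2 + S') 0)))
          ((fun t : ℝ => t^2 + S') 0) := by
        apply Real.hasDerivAt_sqrt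
        simp; positivity
      have := hsq.comp 0 hu
      simp at this; exact this
    have hΦ : HasDerivAt
        (fun t : ℝ => f (βhat + t • v) + lam * (1-α) * Real.sqrt c * Real.sqrt (t^2 + S'))
        D 0 := by
      have := hF.add (hB.const_mul (lam * (1-α) * Real.sqrt c))
      simp at this; exact this
    apply abs_deriv_le_of_min hΦ
    intro t
    have hmin2 := hΨ t
    rw [hx0] at hmin2
    norm_num at hmin2 ⊢
    ring_nf at hmin2 ⊢
    linarith
  · -- part (ii)
    intro hα1' hxne
    have hxne' : x ≠ 0 := hxne
    set R : ℝ := x^2 + S' with hR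
    have hRpos : 0 < R := by positivity
    have hsR : 0 < Real.sqrt R := Real.sqrt_pos.2 hRpos
    -- derivative of t ↦ |x + t|
    have hA : HasDerivAt (fun t : ℝ => |x + t|) (SignType.sign x : ℝ) 0 := by
      have h1 : HasDerivAt (fun t : ℝ => x + t) 1 0 := by
        simpa using (hasDerivAt_id (0:ℝ)).const_add x
      have h2 : HasDerivAt (|·|) (SignType.sign ((fun t : ℝ => x + t) 0) : ℝ)
          ((fun t : ℝ => x + t) 0) := by
        apply hasDerivAt_abs
        simpa using hxne'
      have := h2.comp 0 h1
      simp at this; exact this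
    -- derivative of t ↦ √((x+t)^2 + S')
    have hu : HasDerivAt (fun t : ℝ => (x + t)^2 + S') (2 * x) 0 := by
      have h1 : HasDerivAt (fun t : ℝ => x + t) 1 0 := by
        simpa using (hasDerivAt_id (0:ℝ)).const_add x
      have := (h1.pow 2).add_const S'
      simpa using this
    have hB : HasDerivAt (fun t : ℝ => Real.sqrt ((x + t)^2 + S')) (x / Real.sqrt R) 0 := by
      have hsq : HasDerivAt Real.sqrt (1 / (2 * Real.sqrt ((fun t : ℝ => (x+t)^2 + S') 0)))
          ((fun t : ℝ => (x+t)^2 + S') 0) := by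
        apply Real.hasDerivAt_sqrt
        simp only [zero_add, add_zero]
        positivity
      have hcomp := hsq.comp 0 hu
      have he : (fun t : ℝ => (x+t)^2 + S') 0 = R := by simp [hR]
      rw [he] at hcomp
      have hne : Real.sqrt R ≠ 0 := ne_of_gt hsR
      have h2 : HasDerivAt (fun t : ℝ => Real.sqrt ((x + t)^2 + S'))
          (1 / (2 * Real.sqrt R) * (2 * x)) 0 := hcomp
      convert h2 using 1
      field_simp
      try ring
    -- total derivative is zero at the local min
    set s : ℝ := (SignType.sign x : ℝ) with hs
    have hΨd : HasDerivAt
        (fun t : ℝ => f (βhat + t • v) + lam * α * |x + t|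
          + lam * (1-α) * (Real.sqrt c * Real.sqrt ((x + t)^2 + S')))
        (D + lam * α * s + lam * (1-α) * (Real.sqrt c * (x / Real.sqrt R))) 0 := by
      have := (hF.add (hA.const_mul (lam * α))).add
        ((hB.const_mul (lam * (1-α) * Real.sqrt c)))
      convert this using 1
      · ext t; ring
      · rfl
      · funext t; simp only [Pi.add_apply]; ring
      · rw [hs]; ring
    have hloc : IsLocalMin
        (fun t : ℝ => f (βhat + t • v) + lam * α * |x + t|
          + lam * (1-α) * (Real.sqrt c * Real.sqrt ((x + t)^2 + S'))) 0 := by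
      apply Filter.Eventually.of_forall
      intro t
      have := hΨ t
      simpa [hb0] using this
    have hzero := hloc.hasDerivAt_eq_zero hΨd
    -- conclude
    have hk : 0 < lam * (1-α) * (Real.sqrt c * (|x| / Real.sqrt R)) := by
      have : 0 < |x| := abs_pos.2 hxne'
      have h1 : 0 < 1 - α := by linarith
      positivity
    rcases lt_or_gt_of_ne hxne' with hxneg | hxpos
    · have hsval : s = -1 := by rw [hs]; simp [hxneg]
      have hxabs : |x| = -x := abs_of_neg hxneg
      have hDval : D = lam * α - lam * (1-α) * (Real.sqrt c * (x / Real.sqrt R)) := by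
        rw [hsval] at hzero; linarith
      have hDpos : lam * α < D := by
        rw [hDval]
        have : lam * (1-α) * (Real.sqrt c * (x / Real.sqrt R))
            = - (lam * (1-α) * (Real.sqrt c * (|x| / Real.sqrt R))) := by
          rw [hxabs]; ring
        rw [this]
        linarith
      calc lam * α < D := hDpos
        _ ≤ |D| := le_abs_self D
    · have hsval : s = 1 := by rw [hs]; simp [hxpos]
      have hxabs : |x| = x := abs_of_pos hxpos
      have hDval : D = -(lam * α) - lam * (1-α) * (Real.sqrt c * (x / Real.sqrt R)) := by
        rw [hsval] at hzero; linarith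
      have hDneg : D < -(lam * α) := by
        rw [hDval]
        have h2 : 0 < lam * (1-α) * (Real.sqrt c * (x / Real.sqrt R)) := by
          rw [← hxabs] at hxpos ⊢; exact hk
        linarith
      calc lam * α < -D := by linarith
        _ ≤ |D| := neg_le_abs D
end

section
/- (DFR-SGL variable screening.) Let f : ℝ^p → ℝ be convex and differentiable, α ∈ [0,1) with α < 1, λ_k ≥ λ_{k+1} > 0, and let β̂(λ_k), β̂(λ_{k+1}) be minimizers of β ↦ f(β) + λ‖β‖_sgl at λ_k and λ_{k+1}. Let g be a group that is active at λ_{k+1} (β̂^{(g)}(λ_{k+1}) ≠ 0) and let i ∈ G_g. Assume the Lipschitz condition |∇_i f(β̂(λ_{k+1})) − ∇_i f(β̂(λ_k))| ≤ α(λ_k − λ_{k+1}). If |∇_i f(β̂(λ_k))| ≤ α(2λ_{k+1} − λ_k), then β̂_i(λ_{k+1}) = 0. -/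
open scoped BigOperators

set_option maxHeartbeats 1000000 in
/-- DFR-SGL variable screening: under the variable-level Lipschitz condition, a variable in
an active group that passes the screening test is inactive at `λ_{k+1}`. -/
theorem dfr_sgl_variable_screening
    {p m : ℕ} (G : Fin m → Finset (Fin p))
    (hpart : ∀ i : Fin p, ∃! g : Fin m, i ∈ G g)
    (α : ℝ) (hα : α ∈ Set.Ico (0:ℝ) 1)
    (f : (Fin p → ℝ) → ℝ)
    (hconv : ConvexOn ℝ Set.univ f) (hdiff : Differentiable ℝ f)
    (lamk lamk1 : ℝ) (hord : lamk1 ≤ lamk) (hpos : 0 < lamk1)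
    (βk βk1 : Fin p → ℝ)
    (hmink : ∀ b : Fin p → ℝ,
      f βk + lamk * sglNorm G α βk ≤ f b + lamk * sglNorm G α b)
    (hmink1 : ∀ b : Fin p → ℝ,
      f βk1 + lamk1 * sglNorm G α βk1 ≤ f b + lamk1 * sglNorm G α b)
    (g : Fin m) (hactive : ∃ j ∈ G g, βk1 j ≠ 0)
    (i : Fin p) (hi : i ∈ G g)
    (hlip : |fderiv ℝ f βk1 (Pi.single i 1) - fderiv ℝ f βk (Pi.single i 1)|
      ≤ α * (lamk - lamk1))
    (hscreen : |fderiv ℝ f βk (Pi.single i 1)| ≤ α * (2 * lamk1 - lamk)) :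
    βk1 i = 0 := by
  obtain ⟨hα0, hα1⟩ := hα
  by_contra hb
  have hgu : ∀ g' : Fin m, i ∈ G g' → g' = g := fun g' h => (hpart i).unique h hi
  set x₀ : ℝ := βk1 i with hx₀def
  set e : Fin p → ℝ := Pi.single i 1 with he
  set D : ℝ := fderiv ℝ f βk1 e with hDdef
  set Dk : ℝ := fderiv ℝ f βk e with hDkdef
  set c : ℝ := Real.sqrt ((G g).card) with hcdef
  set A : ℝ := ∑ j ∈ Finset.univ.erase i, |βk1 j| with hAdef
  set B : ℝ := ∑ j ∈ (G g).erase i, (βk1 j) ^ 2 with hBdef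
  set R : ℝ := ∑ g' ∈ Finset.univ.erase g,
      Real.sqrt ((G g').card) * Real.sqrt (∑ j ∈ G g', (βk1 j) ^ 2) with hRdef
  have hB0 : (0:ℝ) ≤ B := Finset.sum_nonneg fun _ _ => sq_nonneg _
  have hx2 : (0:ℝ) < x₀ ^ 2 := by positivity
  have hS0 : (0:ℝ) < x₀ ^ 2 + B := by linarith
  have hSpos : 0 < Real.sqrt (x₀ ^ 2 + B) := Real.sqrt_pos.mpr hS0
  have hcpos : 0 < c := Real.sqrt_pos.mpr (by
    exact_mod_cast Nat.cast_pos.mpr (Finset.card_pos.mpr ⟨i, hi⟩))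
  -- rewrite the SGL norm along the coordinate line
  have hsum1 : ∀ x : ℝ, ∑ j, |Function.update βk1 i x j| = |x| + A := by
    intro x
    rw [← Finset.add_sum_erase _ (fun j => |Function.update βk1 i x j|) (Finset.mem_univ i),
      Function.update_self]
    congr 1
    refine Finset.sum_congr rfl fun j hj => ?_
    rw [Function.update_of_ne (Finset.ne_of_mem_erase hj)]
  have hsum2 : ∀ x : ℝ, ∑ j ∈ G g, (Function.update βk1 i x j) ^ 2 = x ^ 2 + B := by
    intro x
    rw [← Finset.add_sum_erase _ (fun j => (Function.update βk1 i x j) ^ 2) hi,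
      Function.update_self]
    congr 1
    refine Finset.sum_congr rfl fun j hj => ?_
    rw [Function.update_of_ne (Finset.ne_of_mem_erase hj)]
  have hsum3 : ∀ x : ℝ, ∀ g' ∈ Finset.univ.erase g,
      ∑ j ∈ G g', (Function.update βk1 i x j) ^ 2 = ∑ j ∈ G g', (βk1 j) ^ 2 := by
    intro x g' hg'
    have hig' : i ∉ G g' := fun h => (Finset.ne_of_mem_erase hg') (hgu g' h)
    refine Finset.sum_congr rfl fun j hj => ?_
    rw [Function.update_of_ne (by rintro rfl; exact hig' hj)]
  have hSGL : ∀ x : ℝ, sglNorm G α (Function.update βk1 i x) =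
      α * (|x| + A) + (1 - α) * (c * Real.sqrt (x ^ 2 + B) + R) := by
    intro x
    have hrest : ∑ g' ∈ Finset.univ.erase g,
        Real.sqrt ((G g').card) * Real.sqrt (∑ j ∈ G g', (Function.update βk1 i x j) ^ 2)
        = R := by
      refine Finset.sum_congr rfl fun g' hg' => ?_
      rw [hsum3 x g' hg']
    unfold sglNorm
    rw [hsum1, ← Finset.add_sum_erase _
      (fun g' => Real.sqrt ((G g').card) *
        Real.sqrt (∑ j ∈ G g', (Function.update βk1 i x j) ^ 2)) (Finset.mem_univ g)]
    rw [hsum2, hrest]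
  set F : ℝ → ℝ := fun x =>
    f (Function.update βk1 i x) + lamk1 * sglNorm G α (Function.update βk1 i x) with hFdef
  have hupd0 : Function.update βk1 i x₀ = βk1 := Function.update_eq_self i βk1
  have hlocal : IsLocalMin F x₀ := Filter.Eventually.of_forall (fun x => by
    simp only [hFdef, hupd0]; exact hmink1 _)
  -- derivative of the smooth part
  have hγ : HasDerivAt (fun x : ℝ => f (Function.update βk1 i x)) D x₀ := by
    have h1 : (fun x : ℝ => f (Function.update βk1 i x))
        = fun x : ℝ => f (βk1 + (x - x₀) • e) := by
      funext x
      congr 1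
      funext j
      by_cases hj : j = i
      · subst hj
        simp [he, Function.update_self, hx₀def]
      · simp [Function.update_of_ne hj, he, Pi.single_eq_of_ne hj]
    have h2 : HasDerivAt (fun x : ℝ => βk1 + (x - x₀) • e) e x₀ := by
      simpa using (((hasDerivAt_id x₀).sub_const x₀).smul_const e).const_add βk1
    have h3 : HasFDerivAt f (fderiv ℝ f βk1) (βk1 + (x₀ - x₀) • e) := by
      rw [show βk1 + (x₀ - x₀) • e = βk1 by simp]
      exact (hdiff βk1).hasFDerivAt
    rw [h1]
    exact h3.comp_hasDerivAt x₀ h2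
  -- derivative of |x|
  have hs : x₀ ≠ 0 := hb
  obtain ⟨s, hsd, hs1, hsx⟩ : ∃ s : ℝ, HasDerivAt (fun x : ℝ => |x|) s x₀ ∧
      (s = 1 ∨ s = -1) ∧ s * x₀ = |x₀| := by
    rcases hs.lt_or_gt with h | h
    · exact ⟨-1, hasDerivAt_abs_neg h, Or.inr rfl, by rw [abs_of_neg h]; ring⟩
    · exact ⟨1, hasDerivAt_abs_pos h, Or.inl rfl, by rw [abs_of_pos h]; ring⟩
  -- derivative of the sqrt part
  have hsq : HasDerivAt (fun x : ℝ => Real.sqrt (x ^ 2 + B))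
      (x₀ / Real.sqrt (x₀ ^ 2 + B)) x₀ := by
    have h1 : HasDerivAt (fun x : ℝ => x ^ 2 + B) (2 * x₀) x₀ := by
      simpa [mul_comm] using (hasDerivAt_pow 2 x₀).add_const B
    have h2 := (Real.hasDerivAt_sqrt (ne_of_gt hS0)).comp x₀ h1
    refine h2.congr_deriv ?_
    rw [div_mul_eq_mul_div, one_mul, mul_div_mul_left _ _ two_ne_zero]
  have hFd : HasDerivAt F
      (D + lamk1 * (α * s + (1 - α) * (c * (x₀ / Real.sqrt (x₀ ^ 2 + B))))) x₀ := by
    have hFeq : F = fun x : ℝ => f (Function.update βk1 i x) +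
        lamk1 * (α * (|x| + A) + (1 - α) * (c * Real.sqrt (x ^ 2 + B) + R)) := by
      funext x
      show f (Function.update βk1 i x) + lamk1 * sglNorm G α (Function.update βk1 i x) = _
      rw [hSGL x]
    rw [hFeq]
    exact hγ.add ((((hsd.add_const A).const_mul α).add
      (((hsq.const_mul c).add_const R).const_mul (1 - α))).const_mul lamk1)
  have heq : D + lamk1 * (α * s + (1 - α) * (c * (x₀ / Real.sqrt (x₀ ^ 2 + B)))) = 0 :=
    hlocal.hasDerivAt_eq_zero hFd
  -- arithmetic contradiction
  set u : ℝ := c / Real.sqrt (x₀ ^ 2 + B) with hudef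
  have hupos : 0 < u := div_pos hcpos hSpos
  have hDeq : D = -(lamk1 * (s * (α + (1 - α) * u * |x₀|))) := by
    have hx0 : x₀ = s * |x₀| := by
      rcases hs1 with h | h <;> subst h <;> nlinarith [hsx]
    have hss : s * s = 1 := by rcases hs1 with h | h <;> subst h <;> norm_num
    have : c * (x₀ / Real.sqrt (x₀ ^ 2 + B)) = u * (s * |x₀|) := by
      rw [hudef, ← hx0]; ring
    rw [this] at heq
    nlinarith [heq, hss]
  have hxabs : 0 < |x₀| := abs_pos.mpr hs
  have hprodpos : 0 < (1 - α) * u * |x₀| :=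
    mul_pos (mul_pos (by linarith) hupos) hxabs
  have hnn : 0 ≤ α + (1 - α) * u * |x₀| := by linarith
  have hsabs : |s| = 1 := by rcases hs1 with h | h <;> rw [h] <;> norm_num
  have habs : |D| = lamk1 * (α + (1 - α) * u * |x₀|) := by
    rw [hDeq, abs_neg, abs_mul, abs_mul, hsabs, abs_of_nonneg hpos.le,
      abs_of_nonneg hnn, one_mul]
  have hgt : lamk1 * α < |D| := by rw [habs]; nlinarith
  have hle : |D| ≤ α * lamk1 := by
    have htri : |D| ≤ |D - Dk| + |Dk| := by
      calc |D| = |(D - Dk) + Dk| := by ring_nf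
      _ ≤ |D - Dk| + |Dk| := abs_add_le _ _
    linarith [hlip, hscreen, htri]
  linarith
end

section
/- (SGL KKT check.) Let β̂ be a minimizer of β ↦ f(β) + λ‖β‖_sgl over ℝ^p, where f : ℝ^p → ℝ is convex and differentiable and λ > 0. If i ∈ G_g and β̂_i = 0, then |S(∇_i f(β̂), λ(1−α)√p_g)| ≤ λα, where S(a,b) = sign(a)(|a|−b)₊ is the soft-thresholding operator. Equivalently, any variable for which this inequality fails must be active. -/
open scoped BigOperators

/-- Soft-thresholding operator `S(a,b) = sign(a)(|a|-b)₊`. -/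
noncomputable def softThresh (a b : ℝ) : ℝ := Real.sign a * max (|a| - b) 0

private lemma sqrt_sq_add_le (t S : ℝ) (hS : 0 ≤ S) :
    Real.sqrt (t ^ 2 + S) ≤ |t| + Real.sqrt S := by
  have h1 : t ^ 2 + S ≤ (|t| + Real.sqrt S) ^ 2 := by
    have h2 : Real.sqrt S ^ 2 = S := Real.sq_sqrt hS
    have h3 : |t| ^ 2 = t ^ 2 := sq_abs t
    nlinarith [abs_nonneg t, Real.sqrt_nonneg S]
  calc Real.sqrt (t ^ 2 + S) ≤ Real.sqrt ((|t| + Real.sqrt S) ^ 2) :=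
        Real.sqrt_le_sqrt h1
    _ = |t| + Real.sqrt S := by
        rw [Real.sqrt_sq (by positivity)]

/-- SGL KKT check: if variable `i` (in group `g`) is inactive at a minimizer, then
`|S(∇_i f(β̂), λ(1-α)√p_g)| ≤ λα`. -/
theorem sgl_kkt_check
    {p m : ℕ} (G : Fin m → Finset (Fin p))
    (hpart : ∀ i : Fin p, ∃! g : Fin m, i ∈ G g)
    (α : ℝ) (hα : α ∈ Set.Icc (0:ℝ) 1)
    (f : (Fin p → ℝ) → ℝ)
    (hconv : ConvexOn ℝ Set.univ f) (hdiff : Differentiable ℝ f)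
    (lam : ℝ) (hlam : 0 < lam)
    (βhat : Fin p → ℝ)
    (hmin : ∀ b : Fin p → ℝ,
      f βhat + lam * sglNorm G α βhat ≤ f b + lam * sglNorm G α b)
    (g : Fin m) (i : Fin p) (hi : i ∈ G g) (h0 : βhat i = 0) :
    |softThresh (fderiv ℝ f βhat (Pi.single i 1))
        (lam * (1 - α) * Real.sqrt ((G g).card))| ≤ lam * α := by
  obtain ⟨hα0, hα1⟩ := hα
  set sq : ℝ := Real.sqrt ((G g).card) with hsq
  have hsq0 : 0 ≤ sq := Real.sqrt_nonneg _
  set v : Fin p → ℝ := Pi.single i 1 with hv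
  set D : ℝ := fderiv ℝ f βhat v with hD
  set C : ℝ := lam * α + lam * (1 - α) * sq with hC
  -- uniqueness of the group containing i
  obtain ⟨g0, hg0, hguniq⟩ := hpart i
  have hgg : g = g0 := hguniq g hi
  -- the norm inequality
  have hnorm : ∀ t : ℝ, sglNorm G α (βhat + t • v) ≤
      sglNorm G α βhat + (α + (1 - α) * sq) * |t| := by
    intro t
    have hupd : βhat + t • v = Function.update βhat i t := by
      funext j
      by_cases hj : j = i
      · subst hj; simp [hv, h0]
      · simp [hv, Pi.single_apply, hj]
    rw [hupd]
    -- ℓ1 part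
    have h1 : ∑ j, |Function.update βhat i t j| = |t| + ∑ j, |βhat j| := by
      have he : ∀ j ∈ Finset.univ, |Function.update βhat i t j| =
          Function.update (fun j => |βhat j|) i |t| j := by
        intro j _
        by_cases hj : j = i
        · subst hj; simp
        · simp [Function.update_of_ne hj]
      rw [Finset.sum_congr rfl he, Finset.sum_update_of_mem (Finset.mem_univ i),
        ← Finset.erase_eq, Finset.sum_erase_eq_sub (Finset.mem_univ i), h0, abs_zero, sub_zero]
    -- group sums
    have h2 : ∀ g' : Fin m, g' ≠ g →
        ∑ j ∈ G g', (Function.update βhat i t j) ^ 2 = ∑ j ∈ G g', (βhat j) ^ 2 := by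
      intro g' hg' 
      refine Finset.sum_congr rfl fun j hj => ?_
      have hji : j ≠ i := by
        intro h; subst h
        exact hg' ((hguniq g' hj).trans hgg.symm)
      rw [Function.update_of_ne hji]
    have h3 : ∑ j ∈ G g, (Function.update βhat i t j) ^ 2 =
        t ^ 2 + ∑ j ∈ G g, (βhat j) ^ 2 := by
      have he : ∀ j ∈ G g, (Function.update βhat i t j) ^ 2 =
          Function.update (fun j => (βhat j) ^ 2) i (t ^ 2) j := by
        intro j _
        by_cases hj : j = i
        · subst hj; simp
        · simp [Function.update_of_ne hj]
      rw [Finset.sum_congr rfl he, Finset.sum_update_of_mem hi,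
        ← Finset.erase_eq, Finset.sum_erase_eq_sub hi, h0]
      ring
    -- group part of the norm
    have hS0 : 0 ≤ ∑ j ∈ G g, (βhat j) ^ 2 :=
      Finset.sum_nonneg fun j _ => sq_nonneg _
    have h4 : ∑ g', Real.sqrt ((G g').card) *
          Real.sqrt (∑ j ∈ G g', (Function.update βhat i t j) ^ 2) ≤
        sq * |t| + ∑ g', Real.sqrt ((G g').card) *
          Real.sqrt (∑ j ∈ G g', (βhat j) ^ 2) := by
      rw [← Finset.add_sum_erase _ _ (Finset.mem_univ g),
        ← Finset.add_sum_erase _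
          (fun g' => Real.sqrt ((G g').card) * Real.sqrt (∑ j ∈ G g', (βhat j) ^ 2))
          (Finset.mem_univ g)]
      have heq : ∑ g' ∈ Finset.univ.erase g, Real.sqrt ((G g').card) *
            Real.sqrt (∑ j ∈ G g', (Function.update βhat i t j) ^ 2) =
          ∑ g' ∈ Finset.univ.erase g, Real.sqrt ((G g').card) *
            Real.sqrt (∑ j ∈ G g', (βhat j) ^ 2) := by
        refine Finset.sum_congr rfl fun g' hg' => ?_
        rw [h2 g' (Finset.ne_of_mem_erase hg')]
      rw [heq, h3]
      have hone : Real.sqrt ((G g).card) * Real.sqrt (t ^ 2 + ∑ j ∈ G g, (βhat j) ^ 2) ≤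
          sq * |t| + sq * Real.sqrt (∑ j ∈ G g, (βhat j) ^ 2) := by
        have := sqrt_sq_add_le t _ hS0
        calc Real.sqrt ((G g).card) * Real.sqrt (t ^ 2 + ∑ j ∈ G g, (βhat j) ^ 2)
            ≤ sq * (|t| + Real.sqrt (∑ j ∈ G g, (βhat j) ^ 2)) := by
              rw [← hsq]; exact mul_le_mul_of_nonneg_left this hsq0
          _ = sq * |t| + sq * Real.sqrt (∑ j ∈ G g, (βhat j) ^ 2) := by ring
      linarith
    unfold sglNorm
    rw [h1]
    have h5 := mul_le_mul_of_nonneg_left h4 (by linarith : (0:ℝ) ≤ 1 - α)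
    have h6 : α * (|t| + ∑ j, |βhat j|) = α * ∑ j, |βhat j| + α * |t| := by ring
    nlinarith [abs_nonneg t]
  -- key inequality from minimality
  have hCnn : 0 ≤ C := by
    have : 0 ≤ lam * (1 - α) * sq :=
      mul_nonneg (mul_nonneg hlam.le (by linarith)) hsq0
    nlinarith
  have hkey : ∀ t : ℝ, -(C * |t|) ≤ f (βhat + t • v) - f βhat := by
    intro t
    have hm := hmin (βhat + t • v)
    have hn := hnorm t
    have := mul_le_mul_of_nonneg_left hn hlam.le
    have hCC : lam * ((α + (1 - α) * sq) * |t|) = C * |t| := by rw [hC]; ring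
    nlinarith
  -- derivative of t ↦ f (βhat + t • v) at 0
  have hline : HasDerivAt (fun t : ℝ => βhat + t • v) v 0 := by
    simpa using ((hasDerivAt_id (0:ℝ)).smul_const v).const_add βhat
  have hf : HasFDerivAt f (fderiv ℝ f βhat) (βhat + (0:ℝ) • v) := by
    simpa using (hdiff βhat).hasFDerivAt
  have hφ : HasDerivAt (fun t : ℝ => f (βhat + t • v)) D 0 :=
    hf.comp_hasDerivAt 0 hline
  set φ : ℝ → ℝ := fun t => f (βhat + t • v) with hφdef
  have hφ0 : φ 0 = f βhat := by simp [hφdef]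
  have hslope : Filter.Tendsto (slope φ 0) (nhdsWithin 0 {(0:ℝ)}ᶜ) (nhds D) :=
    hasDerivAt_iff_tendsto_slope.mp hφ
  -- lower bound on D from t > 0
  have hlow : -C ≤ D := by
    have hmono : nhdsWithin (0:ℝ) (Set.Ioi 0) ≤ nhdsWithin 0 {(0:ℝ)}ᶜ :=
      nhdsWithin_mono 0 (fun x hx => ne_of_gt hx)
    refine ge_of_tendsto (hslope.mono_left hmono) ?_
    refine Filter.eventually_of_mem self_mem_nhdsWithin fun t ht => ?_
    have ht0 : (0:ℝ) < t := ht
    have hk := hkey t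
    rw [abs_of_pos ht0] at hk
    have : -C ≤ (φ t - φ 0) / t := by
      rw [le_div_iff₀ ht0, hφ0]
      nlinarith
    simpa [slope_def_field, div_eq_mul_inv] using this
  -- upper bound on D from t < 0
  have hhigh : D ≤ C := by
    have hmono : nhdsWithin (0:ℝ) (Set.Iio 0) ≤ nhdsWithin 0 {(0:ℝ)}ᶜ :=
      nhdsWithin_mono 0 (fun x hx => ne_of_lt hx)
    refine le_of_tendsto (hslope.mono_left hmono) ?_
    refine Filter.eventually_of_mem self_mem_nhdsWithin fun t ht => ?_
    have ht0 : t < (0:ℝ) := ht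
    have hk := hkey t
    rw [abs_of_neg ht0] at hk
    have : (φ t - φ 0) / t ≤ C := by
      rw [div_le_iff_of_neg ht0, hφ0]
      nlinarith
    simpa [slope_def_field, div_eq_mul_inv] using this
  have hDabs : |D| ≤ C := abs_le.mpr ⟨hlow, hhigh⟩
  -- conclude
  have hla : 0 ≤ lam * α := by positivity
  unfold softThresh
  rw [abs_mul, abs_of_nonneg (le_max_right (|D| - lam * (1 - α) * sq) 0)]
  rcases eq_or_ne D 0 with hD0 | hD0
  · rw [hD0, Real.sign_zero, abs_zero, zero_mul]
    exact hla
  · have hsign : |Real.sign D| = 1 := by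
      rcases lt_trichotomy D 0 with h | h | h
      · rw [Real.sign_of_neg h]; simp
      · exact absurd h hD0
      · rw [Real.sign_of_pos h]; simp
    rw [hsign, one_mul]
    refine max_le ?_ hla
    have h1 := abs_le.mp hDabs
    linarith [hDabs]
end

section
/- (Group soft-thresholding characterization.) Let z ∈ ℝ^k, let c ∈ ℝ^k with c_i ≥ 0 for all i, and let d ≥ 0. Then there exist φ ∈ ℝ^k with ‖φ‖_∞ ≤ 1 and ψ ∈ ℝ^k with ‖ψ‖₂ ≤ 1 such that z_i + c_i φ_i + d ψ_i = 0 for all i, if and only if ‖S(z, c)‖₂ ≤ d, where S is applied coordinatewise: S(z,c)_i = sign(z_i)(|z_i| − c_i)₊. -/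
open scoped BigOperators

lemma rsign_mul_abs (a : ℝ) : Real.sign a * |a| = a := by
  rcases lt_trichotomy a 0 with h | h | h
  · rw [Real.sign_of_neg h, abs_of_neg h]; ring
  · simp [h]
  · rw [Real.sign_of_pos h, abs_of_pos h, one_mul]

lemma softThresh_abs_le (a b : ℝ) : |softThresh a b| ≤ max (|a| - b) 0 := by
  unfold softThresh
  rw [abs_mul, abs_of_nonneg (le_max_right (|a| - b) (0:ℝ))]
  calc |Real.sign a| * max (|a| - b) 0 ≤ 1 * max (|a| - b) 0 := by
        apply mul_le_mul_of_nonneg_right _ (le_max_right _ _)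
        rcases Real.sign_apply_eq a with h | h | h <;> simp [h]
    _ = max (|a| - b) 0 := one_mul _

lemma softThresh_le_lin (a b t : ℝ) (hb : 0 ≤ b) (ht : |t| ≤ 1) :
    |softThresh a b| ≤ |a + b * t| := by
  refine (softThresh_abs_le a b).trans (max_le ?_ (abs_nonneg _))
  have h1 : |a| - |b * t| ≤ |a + b * t| := by
    have := abs_sub_abs_le_abs_sub a (-(b * t))
    simpa [sub_neg_eq_add] using this
  have h2 : |b * t| ≤ b := by
    rw [abs_mul, abs_of_nonneg hb]
    nlinarith [abs_nonneg t]
  linarith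

lemma sub_softThresh_abs_le (a b : ℝ) (hb : 0 ≤ b) : |a - softThresh a b| ≤ b := by
  unfold softThresh
  rcases eq_or_ne a 0 with h | h
  · simp [h, hb]
  · have hs : |Real.sign a| = 1 := by
      rcases lt_trichotomy a 0 with hl | hl | hl
      · simp [Real.sign_of_neg hl]
      · exact absurd hl h
      · simp [Real.sign_of_pos hl]
    rcases le_or_gt (|a|) b with hab | hab
    · rw [max_eq_right (by linarith)]
      simpa using (abs_le.mpr ⟨by linarith [neg_abs_le a], by linarith [le_abs_self a]⟩ :
        |a - Real.sign a * 0| ≤ b)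
    · rw [max_eq_left (by linarith)]
      have : a - Real.sign a * (|a| - b) = Real.sign a * b := by
        have := rsign_mul_abs a
        nlinarith [this]
      rw [this, abs_mul, hs, one_mul, abs_of_nonneg hb]

/-- Group soft-thresholding characterization: there exist `φ` with `‖φ‖_∞ ≤ 1` and `ψ` with
`‖ψ‖₂ ≤ 1` such that `z + c∘φ + dψ = 0` iff `‖S(z,c)‖₂ ≤ d`. -/
theorem group_softThresh_char (k : ℕ) (z c : Fin k → ℝ) (hc : ∀ i, 0 ≤ c i)
    (d : ℝ) (hd : 0 ≤ d) :
    (∃ φ ψ : Fin k → ℝ, (∀ i, |φ i| ≤ 1) ∧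
        Real.sqrt (∑ i, (ψ i) ^ 2) ≤ 1 ∧
        ∀ i, z i + c i * φ i + d * ψ i = 0) ↔
      Real.sqrt (∑ i, (softThresh (z i) (c i)) ^ 2) ≤ d := by
  constructor
  · rintro ⟨φ, ψ, hφ, hψ, heq⟩
    have hterm : ∀ i, (softThresh (z i) (c i)) ^ 2 ≤ d ^ 2 * ψ i ^ 2 := by
      intro i
      have h1 : |softThresh (z i) (c i)| ≤ |z i + c i * φ i| :=
        softThresh_le_lin _ _ _ (hc i) (hφ i)
      have h2 : z i + c i * φ i = -(d * ψ i) := by linarith [heq i]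
      rw [h2, abs_neg] at h1
      calc (softThresh (z i) (c i)) ^ 2 = |softThresh (z i) (c i)| ^ 2 := (sq_abs _).symm
        _ ≤ |d * ψ i| ^ 2 := by nlinarith [abs_nonneg (softThresh (z i) (c i))]
        _ = d ^ 2 * ψ i ^ 2 := by rw [sq_abs]; ring
    calc Real.sqrt (∑ i, (softThresh (z i) (c i)) ^ 2)
        ≤ Real.sqrt (∑ i, d ^ 2 * ψ i ^ 2) :=
          Real.sqrt_le_sqrt (Finset.sum_le_sum fun i _ => hterm i)
      _ = Real.sqrt (d ^ 2 * ∑ i, ψ i ^ 2) := by rw [Finset.mul_sum]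
      _ = d * Real.sqrt (∑ i, ψ i ^ 2) := by
          rw [Real.sqrt_mul (sq_nonneg d), Real.sqrt_sq hd]
      _ ≤ d * 1 := mul_le_mul_of_nonneg_left hψ hd
      _ = d := mul_one d
  · intro h
    set S : Fin k → ℝ := fun i => softThresh (z i) (c i) with hS
    refine ⟨fun i => if c i = 0 then 0 else (S i - z i) / c i,
      fun i => if d = 0 then 0 else -S i / d, ?_, ?_, ?_⟩
    · intro i
      dsimp only
      by_cases hci : c i = 0
      · simp [hci]
      · rw [if_neg hci, abs_div, abs_of_nonneg (hc i),
          div_le_one (lt_of_le_of_ne (hc i) (Ne.symm hci))]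
        have := sub_softThresh_abs_le (z i) (c i) (hc i)
        rwa [abs_sub_comm] at this
    · by_cases hd0 : d = 0
      · simp [hd0]
      · have hdpos : 0 < d := lt_of_le_of_ne hd (Ne.symm hd0)
        have : ∑ i, ((if d = 0 then 0 else -S i / d)) ^ 2 = (∑ i, S i ^ 2) / d ^ 2 := by
          rw [Finset.sum_div]
          refine Finset.sum_congr rfl fun i _ => ?_
          rw [if_neg hd0]; ring
        rw [this, Real.sqrt_div (Finset.sum_nonneg fun i _ => sq_nonneg (S i)),
          Real.sqrt_sq hd, div_le_one hdpos]
        exact h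
    · intro i
      have hcz : c i * (if c i = 0 then 0 else (S i - z i) / c i) = S i - z i := by
        by_cases hci : c i = 0
        · have : S i = z i := by
            simp only [hS, softThresh, hci, sub_zero]
            rw [max_eq_left (abs_nonneg _), rsign_mul_abs]
          simp [hci, this]
        · rw [if_neg hci]; field_simp
      have hdz : d * (if d = 0 then 0 else -S i / d) = -S i := by
        by_cases hd0 : d = 0
        · have hsum : ∑ j, S j ^ 2 = 0 := by
            have h0 : Real.sqrt (∑ j, S j ^ 2) = 0 := le_antisymm (hd0 ▸ h) (Real.sqrt_nonneg _)
            have hle : (∑ j, S j ^ 2) ≤ 0 := Real.sqrt_eq_zero'.mp h0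
            exact le_antisymm hle (Finset.sum_nonneg fun j _ => sq_nonneg (S j))
          have : S i = 0 := by
            have := Finset.sum_eq_zero_iff_of_nonneg (fun j _ => sq_nonneg (S j)) |>.mp hsum i (Finset.mem_univ i)
            exact pow_eq_zero_iff (n := 2) (by norm_num) |>.mp this
          simp [hd0, this]
        · rw [if_neg hd0]; field_simp
      rw [hcz, hdz]; ring
end

section
/- (SGL group first-order inactivity condition.) Let β̂ be a minimizer of β ↦ f(β) + λ‖β‖_sgl over ℝ^p, where f : ℝ^p → ℝ is convex and differentiable and λ > 0. For any group g: (i) if β̂^{(g)} = 0, then ‖S(∇_g f(β̂), λα)‖₂ ≤ λ(1−α)√p_g, where S is applied coordinatewise with constant threshold λα; (ii) conversely, if ‖S(∇_g f(β̂), λα)‖₂ < λ(1−α)√p_g, then β̂^{(g)} = 0 (indeed, for an active group the left-hand side equals λ(1−α)√p_g exactly). -/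
open scoped BigOperators
open Filter Topology

section Aux

lemma st_zero_of_abs_le {a μ : ℝ} (h : |a| ≤ μ) : softThresh a μ = 0 := by
  simp [softThresh, max_eq_right (sub_nonpos.2 h)]

lemma st_formula {μ c x : ℝ} (hμ : 0 ≤ μ) (hc : 0 ≤ c) (hx : x ≠ 0) :
    softThresh (-(μ * Real.sign x) - c * x) μ = -(c * x) := by
  rcases hx.lt_or_gt with h | h
  · have hs : Real.sign x = -1 := Real.sign_of_neg h
    have h1 : -(μ * Real.sign x) - c * x = μ + c * (-x) := by rw [hs]; ring
    have haux : 0 ≤ c * (-x) := mul_nonneg hc (by linarith)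
    have h2 : (0:ℝ) ≤ μ + c * (-x) := by linarith
    rcases eq_or_lt_of_le h2 with h3 | h3
    · have hcx : c * x = 0 := by nlinarith
      rw [h1, ← h3, hcx, neg_zero]
      simp [softThresh]
    · have hsg : Real.sign (-(μ * Real.sign x) - c * x) = 1 := by
        rw [h1]; exact Real.sign_of_pos h3
      rw [softThresh, hsg, h1, abs_of_nonneg h2]
      have hm : max (μ + c * -x - μ) 0 = c * (-x) := by
        rw [max_eq_left (by linarith)]; ring
      rw [hm]; ring
  · have hs : Real.sign x = 1 := Real.sign_of_pos h
    have h1 : -(μ * Real.sign x) - c * x = -(μ + c * x) := by rw [hs]; ring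
    have haux : 0 ≤ c * x := mul_nonneg hc h.le
    have h2 : (0:ℝ) ≤ μ + c * x := by linarith
    rcases eq_or_lt_of_le h2 with h3 | h3
    · have hcx : c * x = 0 := by nlinarith
      rw [h1, ← h3, hcx, neg_zero]
      simp [softThresh]
    · have hsg : Real.sign (-(μ * Real.sign x) - c * x) = -1 := by
        rw [h1]; exact Real.sign_of_neg (by linarith)
      rw [softThresh, hsg, h1, abs_neg, abs_of_nonneg h2]
      have hm : max (μ + c * x - μ) 0 = c * x := by
        rw [max_eq_left (by linarith)]; ring
      rw [hm]; ring

lemma mul_st (a μ : ℝ) :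
    a * softThresh a μ = softThresh a μ ^ 2 + μ * |softThresh a μ| := by
  rcases eq_or_ne a 0 with rfl | ha
  · simp [softThresh]
  rcases le_or_gt (|a| - μ) 0 with h | h
  · simp [softThresh, max_eq_right h]
  · have hst : softThresh a μ = Real.sign a * (|a| - μ) := by
      rw [softThresh, max_eq_left h.le]
    have hsa : Real.sign a * a = |a| := by
      rcases ha.lt_or_gt with h' | h'
      · rw [Real.sign_of_neg h', abs_of_neg h']; ring
      · rw [Real.sign_of_pos h', abs_of_pos h']; ring
    have hs2 : Real.sign a * Real.sign a = 1 := by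
      rcases ha.lt_or_gt with h' | h'
      · rw [Real.sign_of_neg h']; ring
      · rw [Real.sign_of_pos h']; ring
    have habs : |softThresh a μ| = |a| - μ := by
      rw [hst, abs_mul, abs_of_pos h]
      rcases ha.lt_or_gt with h' | h'
      · rw [Real.sign_of_neg h']; simp
      · rw [Real.sign_of_pos h']; simp
    rw [habs, hst]
    linear_combination (|a| - μ) * hsa - (|a| - μ)^2 * hs2

lemma deriv_ge_of_right (φ : ℝ → ℝ) (D μ : ℝ) (hD : HasDerivAt φ D 0)
    (h : ∀ t, 0 < t → φ 0 ≤ φ t + μ * t) : -μ ≤ D := by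
  have hs := hasDerivAt_iff_tendsto_slope.1 hD
  have h2 : Tendsto (slope φ 0) (𝓝[>] 0) (𝓝 D) :=
    hs.mono_left (nhdsWithin_mono _ (fun x hx => ne_of_gt hx))
  refine ge_of_tendsto h2 ?_
  filter_upwards [self_mem_nhdsWithin] with t ht
  have ht' : (0:ℝ) < t := ht
  have hsl : slope φ 0 t = (φ t - φ 0) / t := by simp [slope]; ring
  rw [hsl, le_div_iff₀ ht']
  linarith [h t ht']

lemma deriv_le_of_left (φ : ℝ → ℝ) (D μ : ℝ) (hD : HasDerivAt φ D 0)
    (h : ∀ t, t < 0 → φ 0 ≤ φ t - μ * t) : D ≤ μ := by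
  have hs := hasDerivAt_iff_tendsto_slope.1 hD
  have h2 : Tendsto (slope φ 0) (𝓝[<] 0) (𝓝 D) :=
    hs.mono_left (nhdsWithin_mono _ (fun x hx => ne_of_lt hx))
  refine le_of_tendsto h2 ?_
  filter_upwards [self_mem_nhdsWithin] with t ht
  have ht' : t < (0:ℝ) := ht
  have hsl : slope φ 0 t = (φ t - φ 0) / t := by simp [slope]; ring
  rw [hsl, div_le_iff_of_neg ht']
  linarith [h t ht']

lemma onedim_zero (φ : ℝ → ℝ) (D μ : ℝ) (hD : HasDerivAt φ D 0)
    (h : ∀ t, φ 0 ≤ φ t + μ * |t|) : |D| ≤ μ := by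
  rw [abs_le]
  constructor
  · exact deriv_ge_of_right φ D μ hD (fun t ht => by
      have := h t; rwa [abs_of_pos ht] at this)
  · exact deriv_le_of_left φ D μ hD (fun t ht => by
      have := h t; rw [abs_of_neg ht] at this; linarith)

lemma onedim_ne (φ : ℝ → ℝ) (D μ x : ℝ) (hD : HasDerivAt φ D 0) (hx : x ≠ 0)
    (h : ∀ t, φ 0 + μ * |x| ≤ φ t + μ * |x + t|) : D = -(μ * Real.sign x) := by
  rcases hx.lt_or_gt with hxn | hxp
  · have hψ : HasDerivAt (fun t => φ t - μ * t) (D - μ) 0 := by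
      exact (hD.sub ((hasDerivAt_id (0:ℝ)).const_mul μ)).congr_deriv (by ring)
    have hloc : IsLocalMin (fun t => φ t - μ * t) 0 := by
      have hmem : Set.Ioo (x) (-x) ∈ 𝓝 (0:ℝ) :=
        Ioo_mem_nhds hxn (by linarith)
      filter_upwards [hmem] with t ht
      have habs : |x + t| = -(x + t) := abs_of_neg (by cases ht; linarith)
      have h' := h t
      rw [habs, abs_of_neg hxn] at h'
      have hfin : φ 0 - μ * 0 ≤ φ t - μ * t := by linarith
      simpa using hfin
    have := hloc.hasDerivAt_eq_zero hψ
    rw [Real.sign_of_neg hxn]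
    linarith
  · have hψ : HasDerivAt (fun t => φ t + μ * t) (D + μ) 0 := by
      exact (hD.add ((hasDerivAt_id (0:ℝ)).const_mul μ)).congr_deriv (by ring)
    have hloc : IsLocalMin (fun t => φ t + μ * t) 0 := by
      have hmem : Set.Ioo (-x) (x) ∈ 𝓝 (0:ℝ) :=
        Ioo_mem_nhds (by linarith) hxp
      filter_upwards [hmem] with t ht
      have habs : |x + t| = x + t := abs_of_pos (by cases ht; linarith)
      have h' := h t
      rw [habs, abs_of_pos hxp] at h'
      have hfin : φ 0 + μ * 0 ≤ φ t + μ * t := by linarith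
      simpa using hfin
    have := hloc.hasDerivAt_eq_zero hψ
    rw [Real.sign_of_pos hxp]
    linarith

lemma line_hasDerivAt {p : ℕ} (f : (Fin p → ℝ) → ℝ) (hdiff : Differentiable ℝ f)
    (β v : Fin p → ℝ) :
    HasDerivAt (fun t : ℝ => f (β + t • v)) (fderiv ℝ f β v) 0 := by
  have hc : HasDerivAt (fun t : ℝ => β + t • v) v 0 := by
    simpa using ((hasDerivAt_id (0:ℝ)).smul_const v).const_add β
  have hf : HasFDerivAt f (fderiv ℝ f β) (β + (0:ℝ) • v) := by
    simpa using (hdiff β).hasFDerivAt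
  exact hf.comp_hasDerivAt 0 hc

lemma fderiv_expand {p : ℕ} (f : (Fin p → ℝ) → ℝ) (β d : Fin p → ℝ) :
    fderiv ℝ f β d = ∑ i, d i * fderiv ℝ f β (Pi.single i 1) := by
  have hd : d = ∑ i, d i • (Pi.single i 1 : Fin p → ℝ) := by
    funext j
    rw [Finset.sum_apply]
    simp [Pi.single_apply]
  conv_lhs => rw [hd]
  rw [map_sum]
  simp [smul_eq_mul]

lemma sqrt_comp_hasDerivAt (A x K : ℝ) (hpos : 0 < A + x ^ 2) :
    HasDerivAt (fun t : ℝ => K * Real.sqrt (A + (x + t) ^ 2))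
      (K * (x / Real.sqrt (A + x ^ 2))) 0 := by
  have hinner : HasDerivAt (fun t : ℝ => A + (x + t) ^ 2) (2 * x) 0 := by
    have h1 : HasDerivAt (fun t : ℝ => x + t) 1 0 := by
      simpa using (hasDerivAt_id (0:ℝ)).const_add x
    have h2 := (h1.pow 2).const_add A
    simpa using h2
  have hne : A + (x + 0) ^ 2 ≠ 0 := by simpa using hpos.ne'
  have hs := (Real.hasDerivAt_sqrt hne).comp 0 hinner
  have := hs.const_mul K
  simp only [add_zero] at this
  exact this.congr_deriv (by ring)

lemma sgl_dir {p m : ℕ} (G : Fin m → Finset (Fin p))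
    (hpart : ∀ i : Fin p, ∃! g : Fin m, i ∈ G g) (α : ℝ) (g : Fin m)
    (βh d : Fin p → ℝ) (hd : ∀ j, j ∉ G g → d j = 0)
    (hβ : ∀ j ∈ G g, βh j = 0) (t : ℝ) (ht : 0 ≤ t) :
    sglNorm G α (βh + t • d) = sglNorm G α βh
      + t * (α * ∑ i ∈ G g, |d i| +
          (1 - α) * Real.sqrt ((G g).card) * Real.sqrt (∑ i ∈ G g, d i ^ 2)) := by
  have hzero : ∀ i : Fin p, βh i * d i = 0 := by
    intro i
    by_cases hi : i ∈ G g
    · rw [hβ i hi, zero_mul]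
    · rw [hd i hi, mul_zero]
  have habs : ∀ i : Fin p, |(βh + t • d) i| = |βh i| + t * |d i| := by
    intro i
    by_cases hi : i ∈ G g
    · simp [hβ i hi, abs_mul, abs_of_nonneg ht]
    · simp [hd i hi]
  have hsq : ∀ i : Fin p, ((βh + t • d) i) ^ 2 = βh i ^ 2 + t ^ 2 * d i ^ 2 := by
    intro i
    simp only [Pi.add_apply, Pi.smul_apply, smul_eq_mul]
    nlinarith [hzero i]
  have hl1 : ∑ i, |(βh + t • d) i| = ∑ i, |βh i| + t * ∑ i ∈ G g, |d i| := by
    rw [Finset.sum_congr rfl (fun i _ => habs i), Finset.sum_add_distrib,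
      ← Finset.mul_sum]
    congr 1
    congr 1
    exact (Finset.sum_subset (Finset.subset_univ _)
      (fun j _ hj => by rw [hd j hj, abs_zero])).symm
  have hgrp : ∀ g' : Fin m,
      Real.sqrt ((G g').card) * Real.sqrt (∑ i ∈ G g', ((βh + t • d) i) ^ 2)
        = Real.sqrt ((G g').card) * Real.sqrt (∑ i ∈ G g', βh i ^ 2)
          + (if g' = g then
              t * (Real.sqrt ((G g).card) * Real.sqrt (∑ i ∈ G g, d i ^ 2)) else 0) := by
    intro g'
    rw [Finset.sum_congr rfl (fun i _ => hsq i), Finset.sum_add_distrib, ← Finset.mul_sum]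
    by_cases hg : g' = g
    · subst hg
      have h1 : ∑ i ∈ G g', βh i ^ 2 = 0 :=
        Finset.sum_eq_zero (fun j hj => by rw [hβ j hj]; ring)
      rw [if_pos rfl, h1, zero_add, Real.sqrt_mul (sq_nonneg t), Real.sqrt_sq ht]
      simp
      ring
    · have h2 : ∑ i ∈ G g', d i ^ 2 = 0 := by
        refine Finset.sum_eq_zero (fun j hj => ?_)
        have hjg : j ∉ G g := by
          intro hjg
          exact hg ((hpart j).unique hj hjg)
        rw [hd j hjg]; ring
      rw [if_neg hg, h2]
      simp
  have hgs : ∑ g', Real.sqrt ((G g').card) * Real.sqrt (∑ i ∈ G g', ((βh + t • d) i) ^ 2)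
      = ∑ g', Real.sqrt ((G g').card) * Real.sqrt (∑ i ∈ G g', βh i ^ 2)
        + t * (Real.sqrt ((G g).card) * Real.sqrt (∑ i ∈ G g, d i ^ 2)) := by
    rw [Finset.sum_congr rfl (fun g' _ => hgrp g'), Finset.sum_add_distrib]
    congr 1
    simp
  rw [sglNorm, sglNorm, hl1, hgs]
  ring

lemma sgl_single {p m : ℕ} (G : Fin m → Finset (Fin p))
    (hpart : ∀ i : Fin p, ∃! g : Fin m, i ∈ G g) (α : ℝ) (g : Fin m)
    (i : Fin p) (hi : i ∈ G g) (βh : Fin p → ℝ) (t : ℝ) :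
    sglNorm G α (βh + t • (Pi.single i 1 : Fin p → ℝ)) = sglNorm G α βh
      + α * (|βh i + t| - |βh i|)
      + (1 - α) * Real.sqrt ((G g).card) *
          (Real.sqrt ((∑ j ∈ G g, βh j ^ 2) - βh i ^ 2 + (βh i + t) ^ 2)
            - Real.sqrt (∑ j ∈ G g, βh j ^ 2)) := by
  have happ : ∀ j : Fin p, (βh + t • (Pi.single i 1 : Fin p → ℝ)) j
      = βh j + (if j = i then t else 0) := by
    intro j
    simp [Pi.single_apply]
  have habs : ∀ j : Fin p, |(βh + t • (Pi.single i 1 : Fin p → ℝ)) j|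
      = |βh j| + (if j = i then |βh i + t| - |βh i| else 0) := by
    intro j
    rw [happ j]
    by_cases hj : j = i
    · subst hj; simp
    · simp [hj]
  have hsq : ∀ j : Fin p, ((βh + t • (Pi.single i 1 : Fin p → ℝ)) j) ^ 2
      = βh j ^ 2 + (if j = i then (βh i + t) ^ 2 - βh i ^ 2 else 0) := by
    intro j
    rw [happ j]
    by_cases hj : j = i
    · subst hj; simp
    · simp [hj]
  have hl1 : ∑ j, |(βh + t • (Pi.single i 1 : Fin p → ℝ)) j|
      = ∑ j, |βh j| + (|βh i + t| - |βh i|) := by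
    rw [Finset.sum_congr rfl (fun j _ => habs j), Finset.sum_add_distrib]
    congr 1
    simp
  have hgrp : ∀ g' : Fin m,
      Real.sqrt ((G g').card) *
          Real.sqrt (∑ j ∈ G g', ((βh + t • (Pi.single i 1 : Fin p → ℝ)) j) ^ 2)
        = Real.sqrt ((G g').card) * Real.sqrt (∑ j ∈ G g', βh j ^ 2)
          + (if g' = g then Real.sqrt ((G g).card) *
              (Real.sqrt ((∑ j ∈ G g, βh j ^ 2) - βh i ^ 2 + (βh i + t) ^ 2)
                - Real.sqrt (∑ j ∈ G g, βh j ^ 2)) else 0) := by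
    intro g'
    rw [Finset.sum_congr rfl (fun j _ => hsq j), Finset.sum_add_distrib]
    by_cases hg : g' = g
    · subst hg
      rw [if_pos rfl, Finset.sum_ite_eq' (G g') i, if_pos hi]
      rw [show (∑ j ∈ G g', βh j ^ 2) + ((βh i + t) ^ 2 - βh i ^ 2)
        = (∑ j ∈ G g', βh j ^ 2) - βh i ^ 2 + (βh i + t) ^ 2 by ring]
      ring
    · have hnotin : i ∉ G g' := by
        intro hig'
        exact hg (((hpart i).unique hig' hi))
      rw [if_neg hg, Finset.sum_ite_eq' (G g') i, if_neg hnotin]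
      simp
  rw [sglNorm, sglNorm, hl1, Finset.sum_congr rfl (fun g' _ => hgrp g'),
    Finset.sum_add_distrib]
  simp only [Finset.sum_ite_eq', Finset.mem_univ, if_pos]
  ring

end Aux

/-- SGL group first-order inactivity condition: a group is inactive at a minimizer iff
`‖S(∇_g f(β̂), λα)‖₂ ≤ λ(1-α)√p_g`, with strict inequality certifying inactivity and
equality holding at active groups. -/
theorem sgl_group_first_order
    {p m : ℕ} (G : Fin m → Finset (Fin p))
    (hpart : ∀ i : Fin p, ∃! g : Fin m, i ∈ G g)
    (α : ℝ) (hα : α ∈ Set.Icc (0:ℝ) 1)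
    (f : (Fin p → ℝ) → ℝ)
    (hconv : ConvexOn ℝ Set.univ f) (hdiff : Differentiable ℝ f)
    (lam : ℝ) (hlam : 0 < lam)
    (βhat : Fin p → ℝ)
    (hmin : ∀ b : Fin p → ℝ,
      f βhat + lam * sglNorm G α βhat ≤ f b + lam * sglNorm G α b)
    (g : Fin m) :
    ((∀ i ∈ G g, βhat i = 0) →
      Real.sqrt (∑ i ∈ G g,
          (softThresh (fderiv ℝ f βhat (Pi.single i 1)) (lam * α)) ^ 2)
        ≤ lam * (1 - α) * Real.sqrt ((G g).card)) ∧
    (Real.sqrt (∑ i ∈ G g,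
          (softThresh (fderiv ℝ f βhat (Pi.single i 1)) (lam * α)) ^ 2)
        < lam * (1 - α) * Real.sqrt ((G g).card) →
      ∀ i ∈ G g, βhat i = 0) ∧
    ((∃ j ∈ G g, βhat j ≠ 0) →
      Real.sqrt (∑ i ∈ G g,
          (softThresh (fderiv ℝ f βhat (Pi.single i 1)) (lam * α)) ^ 2)
        = lam * (1 - α) * Real.sqrt ((G g).card)) := by
  obtain ⟨hα0, hα1⟩ := hα
  set μ := lam * α with hμdef
  have hμ0 : 0 ≤ μ := mul_nonneg hlam.le hα0
  set s : Fin p → ℝ := fun i => softThresh (fderiv ℝ f βhat (Pi.single i 1)) μ with hsdef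
  set K : ℝ := lam * (1 - α) * Real.sqrt ((G g).card) with hKdef
  have hK0 : 0 ≤ K := by
    apply mul_nonneg (mul_nonneg hlam.le (by linarith)) (Real.sqrt_nonneg _)
  -- Part 1
  have part1 : (∀ i ∈ G g, βhat i = 0) →
      Real.sqrt (∑ i ∈ G g, s i ^ 2) ≤ K := by
    intro hz
    classical
    set d : Fin p → ℝ := fun j => if j ∈ G g then -(s j) else 0 with hddef
    have hd : ∀ j, j ∉ G g → d j = 0 := fun j hj => by simp [hddef, hj]
    have hdin : ∀ j ∈ G g, d j = -(s j) := fun j hj => by simp [hddef, hj]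
    set Q : ℝ := Real.sqrt (∑ i ∈ G g, s i ^ 2) with hQdef
    have hQ0 : 0 ≤ Q := Real.sqrt_nonneg _
    have hQsq : Q ^ 2 = ∑ i ∈ G g, s i ^ 2 :=
      Real.sq_sqrt (Finset.sum_nonneg (fun i _ => sq_nonneg _))
    have hdabs : ∑ i ∈ G g, |d i| = ∑ i ∈ G g, |s i| :=
      Finset.sum_congr rfl (fun i hi => by rw [hdin i hi, abs_neg])
    have hdsq : ∑ i ∈ G g, d i ^ 2 = ∑ i ∈ G g, s i ^ 2 :=
      Finset.sum_congr rfl (fun i hi => by rw [hdin i hi]; ring)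
    set C : ℝ := α * ∑ i ∈ G g, |s i| + (1 - α) * Real.sqrt ((G g).card) * Q with hCdef
    have hD := line_hasDerivAt f hdiff βhat d
    have hlower : -(lam * C) ≤ fderiv ℝ f βhat d := by
      apply deriv_ge_of_right _ _ _ hD
      intro t ht
      have hmint := hmin (βhat + t • d)
      rw [sgl_dir G hpart α g βhat d hd hz t ht.le] at hmint
      have hphi0 : f (βhat + (0:ℝ) • d) = f βhat := by simp
      rw [hphi0, hCdef, hQdef, ← hdabs, ← hdsq]
      nlinarith [hmint]
    have hDval : fderiv ℝ f βhat d = -(∑ i ∈ G g, s i ^ 2) - μ * ∑ i ∈ G g, |s i| := by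
      rw [fderiv_expand]
      rw [← Finset.sum_subset (Finset.subset_univ (G g))
        (fun j _ hj => by rw [hd j hj, zero_mul])]
      rw [show -(∑ i ∈ G g, s i ^ 2) - μ * ∑ i ∈ G g, |s i|
        = ∑ i ∈ G g, (-(s i ^ 2) - μ * |s i|) by
          rw [Finset.sum_sub_distrib, ← Finset.sum_neg_distrib, ← Finset.mul_sum]]
      refine Finset.sum_congr rfl (fun i hi => ?_)
      rw [hdin i hi]
      have := mul_st (fderiv ℝ f βhat (Pi.single i 1)) μ
      rw [hsdef]
      simp only
      nlinarith [this]
    rw [hDval] at hlower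
    have hkey : Q ^ 2 ≤ K * Q := by
      rw [hQsq]
      have : lam * C = μ * ∑ i ∈ G g, |s i| + K * Q := by
        rw [hCdef, hKdef, hμdef]; ring
      nlinarith [hlower, this]
    rcases eq_or_lt_of_le hQ0 with h | h
    · rw [← h]; exact hK0
    · nlinarith [hkey]
  -- Part 3
  have part3 : (∃ j ∈ G g, βhat j ≠ 0) →
      Real.sqrt (∑ i ∈ G g, s i ^ 2) = K := by
    rintro ⟨j, hj, hjne⟩
    set N2 : ℝ := ∑ i ∈ G g, βhat i ^ 2 with hN2def
    have hN2pos : 0 < N2 := by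
      apply Finset.sum_pos' (fun i _ => sq_nonneg _)
      exact ⟨j, hj, by positivity⟩
    set N : ℝ := Real.sqrt N2 with hNdef
    have hNpos : 0 < N := Real.sqrt_pos.2 hN2pos
    have hNsq : N ^ 2 = N2 := Real.sq_sqrt hN2pos.le
    set c : ℝ := K / N with hcdef
    have hc0 : 0 ≤ c := div_nonneg hK0 hNpos.le
    have hsi : ∀ i ∈ G g, s i = -(c * βhat i) := by
      intro i hi
      set x : ℝ := βhat i with hxdef
      set A : ℝ := N2 - x ^ 2 with hAdef
      have hApos : 0 < A + x ^ 2 := by rw [hAdef]; simpa using hN2pos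
      set φ : ℝ → ℝ := fun t =>
        f (βhat + t • (Pi.single i 1 : Fin p → ℝ))
          + (lam * (1 - α) * Real.sqrt ((G g).card)) * Real.sqrt (A + (x + t) ^ 2)
        with hφdef
      have hDφ : HasDerivAt φ
          (fderiv ℝ f βhat (Pi.single i 1) + c * x) 0 := by
        have h1 := line_hasDerivAt f hdiff βhat (Pi.single i 1 : Fin p → ℝ)
        have h2 := sqrt_comp_hasDerivAt A x (lam * (1 - α) * Real.sqrt ((G g).card)) hApos
        have h3 := h1.add h2
        have heq : lam * (1 - α) * Real.sqrt ((G g).card) * (x / Real.sqrt (A + x ^ 2))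
            = c * x := by
          rw [hcdef, hKdef, hNdef, hN2def, hAdef]
          rw [show (∑ i ∈ G g, βhat i ^ 2) - x ^ 2 + x ^ 2 = ∑ i ∈ G g, βhat i ^ 2 by ring]
          ring
        rw [heq] at h3
        exact h3
      have hmineq : ∀ t, φ 0 + μ * |x| ≤ φ t + μ * |x + t| := by
        intro t
        have hmint := hmin (βhat + t • (Pi.single i 1 : Fin p → ℝ))
        rw [sgl_single G hpart α g i hi βhat t] at hmint
        have hA2 : (∑ j' ∈ G g, βhat j' ^ 2) - βhat i ^ 2 + (βhat i + t) ^ 2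
            = A + (x + t) ^ 2 := by rw [hAdef, hxdef, hN2def]
        have hA3 : Real.sqrt (∑ j' ∈ G g, βhat j' ^ 2) = Real.sqrt (A + x ^ 2) := by
          congr 1
          rw [hAdef, hN2def]; ring
        rw [hA2, hA3] at hmint
        have hφ0 : φ 0 = f βhat
            + (lam * (1 - α) * Real.sqrt ((G g).card)) * Real.sqrt (A + x ^ 2) := by
          rw [hφdef]; simp
        rw [hφ0, hφdef]
        simp only
        rw [hμdef]
        nlinarith [hmint]
      rcases eq_or_ne x 0 with hx0 | hxne
      · have := onedim_zero φ _ μ hDφ (fun t => by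
          have := hmineq t; rwa [hx0, abs_zero, mul_zero, add_zero, zero_add] at this)
        rw [hx0, mul_zero, add_zero] at this
        rw [hsdef]
        simp only
        rw [st_zero_of_abs_le this, hx0]
        ring
      · have hder := onedim_ne φ _ μ x hDφ hxne hmineq
        have hgi : fderiv ℝ f βhat (Pi.single i 1)
            = -(μ * Real.sign x) - c * x := by linarith
        rw [hsdef]
        simp only
        rw [hgi]
        exact st_formula hμ0 hc0 hxne
    have hsum : ∑ i ∈ G g, s i ^ 2 = c ^ 2 * N2 := by
      rw [hN2def, Finset.mul_sum]
      refine Finset.sum_congr rfl (fun i hi => ?_)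
      rw [hsi i hi]; ring
    rw [hsum, Real.sqrt_mul (sq_nonneg c), Real.sqrt_sq hc0, ← hNdef, hcdef]
    field_simp
  refine ⟨part1, ?_, part3⟩
  intro hlt
  by_contra hcon
  push_neg at hcon
  obtain ⟨i, hi, hine⟩ := hcon
  have := part3 ⟨i, hi, hine⟩
  rw [this] at hlt
  exact lt_irrefl _ hlt
end

section
/- (Validity of the sparsegl group screening rule.) Let f : ℝ^p → ℝ be convex and differentiable, λ_k ≥ λ_{k+1} > 0, and let β̂(λ_k), β̂(λ_{k+1}) be minimizers of β ↦ f(β) + λ‖β‖_sgl at λ_k and λ_{k+1}. Fix a group g and assume the Lipschitz condition ‖S(∇_g f(β̂(λ_{k+1})), λ_{k+1}α) − S(∇_g f(β̂(λ_k)), λ_k α)‖₂ ≤ √p_g (1−α)(λ_k − λ_{k+1}), where S is applied coordinatewise. If ‖S(∇_g f(β̂(λ_k)), λ_k α)‖₂ < √p_g (1−α)(2λ_{k+1} − λ_k), then β̂^{(g)}(λ_{k+1}) = 0. -/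
open Filter Topology

open scoped BigOperators

lemma slope_right {h : ℝ → ℝ} {h' c x0 : ℝ} (hd : HasDerivAt h h' x0)
    (hmin : ∀ x, h x0 + c * |x0| ≤ h x + c * |x|) :
    0 ≤ h' + c * (if 0 ≤ x0 then 1 else -1) := by
  set d : ℝ := if 0 ≤ x0 then 1 else -1 with hdd
  have hslope : Tendsto (slope h x0) (𝓝[>] x0) (𝓝 h') :=
    (hasDerivAt_iff_tendsto_slope.mp hd).mono_left
      (nhdsWithin_mono x0 (fun x hx => ne_of_gt hx))
  have habs : ∀ᶠ x in 𝓝[>] x0, (|x| - |x0|) / (x - x0) = d := by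
    by_cases h0 : 0 ≤ x0
    · filter_upwards [self_mem_nhdsWithin] with x hx
      have hx' : x0 < x := hx
      rw [abs_of_nonneg h0, abs_of_nonneg (by linarith)]
      rw [hdd, if_pos h0]
      exact div_self (by linarith)
    · push_neg at h0
      filter_upwards [Ioo_mem_nhdsGT_of_mem (Set.mem_Ico.mpr ⟨le_refl x0, h0⟩)] with x hx
      obtain ⟨hx1, hx2⟩ := hx
      rw [abs_of_neg h0, abs_of_neg hx2, hdd, if_neg (not_le.mpr h0)]
      rw [div_eq_iff (by linarith)]
      ring
  have habs' : Tendsto (fun x => (|x| - |x0|) / (x - x0)) (𝓝[>] x0) (𝓝 d) :=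
    Tendsto.congr' (habs.mono fun x hx => hx.symm) tendsto_const_nhds
  have hq : Tendsto (fun x => slope h x0 x + c * ((|x| - |x0|) / (x - x0)))
      (𝓝[>] x0) (𝓝 (h' + c * d)) := hslope.add (habs'.const_mul c)
  refine ge_of_tendsto hq ?_
  filter_upwards [self_mem_nhdsWithin] with x hx
  have hx' : x0 < x := hx
  have : slope h x0 x + c * ((|x| - |x0|) / (x - x0))
      = ((h x + c * |x|) - (h x0 + c * |x0|)) / (x - x0) := by
    rw [slope_def_field]; field_simp; ring
  rw [this]
  exact div_nonneg (by linarith [hmin x]) (by linarith)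

lemma slope_left {h : ℝ → ℝ} {h' c x0 : ℝ} (hd : HasDerivAt h h' x0)
    (hmin : ∀ x, h x0 + c * |x0| ≤ h x + c * |x|) :
    h' + c * (if 0 < x0 then 1 else -1) ≤ 0 := by
  set d : ℝ := if 0 < x0 then 1 else -1 with hdd
  have hslope : Tendsto (slope h x0) (𝓝[<] x0) (𝓝 h') :=
    (hasDerivAt_iff_tendsto_slope.mp hd).mono_left
      (nhdsWithin_mono x0 (fun x hx => ne_of_lt hx))
  have habs : ∀ᶠ x in 𝓝[<] x0, (|x| - |x0|) / (x - x0) = d := by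
    by_cases h0 : 0 < x0
    · filter_upwards [Ioo_mem_nhdsLT_of_mem (Set.mem_Ioc.mpr ⟨h0, le_refl x0⟩)] with x hx
      obtain ⟨hx1, hx2⟩ := hx
      rw [abs_of_nonneg h0.le, abs_of_nonneg hx1.le, hdd, if_pos h0]
      rw [div_eq_iff (by linarith)]
      ring
    · push_neg at h0
      filter_upwards [self_mem_nhdsWithin] with x hx
      have hx' : x < x0 := hx
      rw [abs_of_nonpos h0, abs_of_neg (by linarith), hdd, if_neg (not_lt.mpr h0)]
      rw [div_eq_iff (by intro hc; rw [sub_eq_zero] at hc; exact absurd hc (ne_of_lt hx'))]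
      ring
  have habs' : Tendsto (fun x => (|x| - |x0|) / (x - x0)) (𝓝[<] x0) (𝓝 d) :=
    Tendsto.congr' (habs.mono fun x hx => hx.symm) tendsto_const_nhds
  have hq : Tendsto (fun x => slope h x0 x + c * ((|x| - |x0|) / (x - x0)))
      (𝓝[<] x0) (𝓝 (h' + c * d)) := hslope.add (habs'.const_mul c)
  refine le_of_tendsto hq ?_
  filter_upwards [self_mem_nhdsWithin] with x hx
  have hx' : x < x0 := hx
  have : slope h x0 x + c * ((|x| - |x0|) / (x - x0))
      = ((h x + c * |x|) - (h x0 + c * |x0|)) / (x - x0) := by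
    rw [slope_def_field]; field_simp; ring
  rw [this]
  exact div_nonpos_of_nonneg_of_nonpos (by linarith [hmin x]) (by linarith)

lemma key1d {h : ℝ → ℝ} {h' c x0 : ℝ} (hd : HasDerivAt h h' x0)
    (hmin : ∀ x, h x0 + c * |x0| ≤ h x + c * |x|) :
    (x0 = 0 → |h'| ≤ c) ∧ (x0 ≠ 0 → h' = -(c * Real.sign x0)) := by
  have hr := slope_right hd hmin
  have hl := slope_left hd hmin
  constructor
  · intro h0
    subst h0
    rw [if_pos le_rfl] at hr
    rw [if_neg (lt_irrefl 0)] at hl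
    rw [abs_le]; constructor <;> linarith
  · intro h0
    rcases h0.lt_or_gt with hneg | hpos
    · rw [if_neg (not_le.mpr hneg)] at hr
      rw [if_neg (not_lt.mpr hneg.le)] at hl
      rw [Real.sign_of_neg hneg]; linarith
    · rw [if_pos hpos.le] at hr
      rw [if_pos hpos] at hl
      rw [Real.sign_of_pos hpos]; linarith

lemma l1_update {p : ℕ} (β : Fin p → ℝ) (i : Fin p) (x : ℝ) :
    ∑ j, |Function.update β i x j| = |x| + ∑ j ∈ Finset.univ \ {i}, |β j| := by
  have : (fun j => |Function.update β i x j|) = Function.update (fun j => |β j|) i |x| := by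
    funext j
    by_cases hj : j = i
    · subst hj; simp
    · simp [Function.update_of_ne hj]
  rw [show ∑ j, |Function.update β i x j| = ∑ j, (fun j => |Function.update β i x j|) j from rfl,
    this, Finset.sum_update_of_mem (Finset.mem_univ i)]

lemma sq_update_mem {p : ℕ} {s : Finset (Fin p)} {i : Fin p} (hi : i ∈ s)
    (β : Fin p → ℝ) (x : ℝ) :
    ∑ j ∈ s, (Function.update β i x j) ^ 2 = x ^ 2 + ∑ j ∈ s \ {i}, (β j) ^ 2 := by
  have : (fun j => (Function.update β i x j) ^ 2)
      = Function.update (fun j => (β j) ^ 2) i (x ^ 2) := by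
    funext j
    by_cases hj : j = i
    · subst hj; simp
    · simp [Function.update_of_ne hj]
  rw [show ∑ j ∈ s, (Function.update β i x j) ^ 2
      = ∑ j ∈ s, (fun j => (Function.update β i x j) ^ 2) j from rfl,
    this, Finset.sum_update_of_mem hi]

lemma sq_update_not_mem {p : ℕ} {s : Finset (Fin p)} {i : Fin p} (hi : i ∉ s)
    (β : Fin p → ℝ) (x : ℝ) :
    ∑ j ∈ s, (Function.update β i x j) ^ 2 = ∑ j ∈ s, (β j) ^ 2 := by
  apply Finset.sum_congr rfl
  intro j hj
  rw [Function.update_of_ne (by rintro rfl; exact hi hj)]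

lemma sgl_update_sub {p m : ℕ} (G : Fin m → Finset (Fin p)) (α : ℝ) {g : Fin m}
    {i : Fin p} (hi : i ∈ G g) (huniq : ∀ h : Fin m, i ∈ G h → h = g)
    (β : Fin p → ℝ) (x y : ℝ) :
    sglNorm G α (Function.update β i x) - sglNorm G α (Function.update β i y) =
      α * (|x| - |y|) + (1 - α) * Real.sqrt ((G g).card) *
        (Real.sqrt (x ^ 2 + ∑ j ∈ (G g) \ {i}, (β j) ^ 2)
          - Real.sqrt (y ^ 2 + ∑ j ∈ (G g) \ {i}, (β j) ^ 2)) := by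
  unfold sglNorm
  rw [l1_update, l1_update]
  rw [← Finset.add_sum_erase Finset.univ _ (Finset.mem_univ g),
    ← Finset.add_sum_erase Finset.univ
      (fun h => Real.sqrt ((G h).card) * Real.sqrt (∑ j ∈ G h, (Function.update β i y j) ^ 2))
      (Finset.mem_univ g)]
  rw [sq_update_mem hi, sq_update_mem hi]
  have herase : ∀ z : ℝ, ∑ h ∈ Finset.univ.erase g,
      Real.sqrt ((G h).card) * Real.sqrt (∑ j ∈ G h, (Function.update β i z j) ^ 2)
      = ∑ h ∈ Finset.univ.erase g,
      Real.sqrt ((G h).card) * Real.sqrt (∑ j ∈ G h, (β j) ^ 2) := by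
    intro z
    apply Finset.sum_congr rfl
    intro h hh
    rw [sq_update_not_mem (fun hmem => (Finset.mem_erase.mp hh).1 (huniq h hmem)) β z]
  rw [herase, herase]
  ring

lemma softThresh_of_abs_le {a b : ℝ} (h : |a| ≤ b) : softThresh a b = 0 := by
  unfold softThresh
  rw [max_eq_right (by linarith), mul_zero]

lemma softThresh_shift {b K x0 : ℝ} (hb : 0 ≤ b) (hK : 0 < K) (hx : x0 ≠ 0) :
    softThresh (-(b * Real.sign x0) - K * x0) b = -(K * x0) := by
  unfold softThresh
  rcases hx.lt_or_gt with hneg | hpos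
  · rw [Real.sign_of_neg hneg]
    have h1 : 0 < -(b * (-1)) - K * x0 := by nlinarith
    rw [Real.sign_of_pos h1, abs_of_pos h1]
    rw [max_eq_left (by nlinarith)]
    ring
  · rw [Real.sign_of_pos hpos]
    have h1 : -(b * 1) - K * x0 < 0 := by nlinarith
    rw [Real.sign_of_neg h1, abs_of_neg h1]
    rw [max_eq_left (by nlinarith)]
    ring

/-- Validity of the sparsegl group screening rule: under its Lipschitz condition, every
group discarded by the rule is inactive at `λ_{k+1}`. -/
theorem sparsegl_group_screening
    {p m : ℕ} (G : Fin m → Finset (Fin p))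
    (hpart : ∀ i : Fin p, ∃! g : Fin m, i ∈ G g)
    (α : ℝ) (hα : α ∈ Set.Icc (0:ℝ) 1)
    (f : (Fin p → ℝ) → ℝ)
    (hconv : ConvexOn ℝ Set.univ f) (hdiff : Differentiable ℝ f)
    (lamk lamk1 : ℝ) (hord : lamk1 ≤ lamk) (hpos : 0 < lamk1)
    (βk βk1 : Fin p → ℝ)
    (hmink : ∀ b : Fin p → ℝ,
      f βk + lamk * sglNorm G α βk ≤ f b + lamk * sglNorm G α b)
    (hmink1 : ∀ b : Fin p → ℝ,
      f βk1 + lamk1 * sglNorm G α βk1 ≤ f b + lamk1 * sglNorm G α b)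
    (g : Fin m)
    (hlip : Real.sqrt (∑ i ∈ G g,
        (softThresh (fderiv ℝ f βk1 (Pi.single i 1)) (lamk1 * α)
          - softThresh (fderiv ℝ f βk (Pi.single i 1)) (lamk * α)) ^ 2)
      ≤ Real.sqrt ((G g).card) * (1 - α) * (lamk - lamk1))
    (hscreen : Real.sqrt (∑ i ∈ G g,
        (softThresh (fderiv ℝ f βk (Pi.single i 1)) (lamk * α)) ^ 2)
      < Real.sqrt ((G g).card) * (1 - α) * (2 * lamk1 - lamk)) :
    ∀ i ∈ G g, βk1 i = 0 := by
  by_contra hcon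
  push_neg at hcon
  obtain ⟨i0, hi0, hb0⟩ := hcon
  obtain ⟨hα0, hα1⟩ := hα
  -- positivity facts extracted from the screening inequality
  have hstot : 0 < Real.sqrt ((G g).card) * (1 - α) * (2 * lamk1 - lamk) :=
    lt_of_le_of_lt (Real.sqrt_nonneg _) hscreen
  have hs1 : 0 < Real.sqrt ((G g).card) * (1 - α) := by
    rcases (mul_nonneg (Real.sqrt_nonneg ((G g).card : ℝ)) (by linarith : (0:ℝ) ≤ 1 - α)).lt_or_eq
      with h | h
    · exact h
    · exfalso; rw [← h, zero_mul] at hstot; exact lt_irrefl 0 hstot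
  have hsc : 0 < Real.sqrt ((G g).card) := by
    rcases (Real.sqrt_nonneg ((G g).card : ℝ)).lt_or_eq with h | h
    · exact h
    · exfalso; rw [← h, zero_mul] at hs1; exact lt_irrefl 0 hs1
  have hα1' : 0 < 1 - α := by nlinarith
  -- the group is not identically zero: derive its norm
  have hNsq : 0 < ∑ j ∈ G g, (βk1 j) ^ 2 := by
    apply Finset.sum_pos'
    · intro j _; positivity
    · exact ⟨i0, hi0, by positivity⟩
  set N := Real.sqrt (∑ j ∈ G g, (βk1 j) ^ 2) with hNdef
  have hN : 0 < N := Real.sqrt_pos.mpr hNsq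
  have hN2 : N ^ 2 = ∑ j ∈ G g, (βk1 j) ^ 2 := Real.sq_sqrt hNsq.le
  set K := lamk1 * (1 - α) * Real.sqrt ((G g).card) / N with hKdef
  have hK : 0 < K := by
    apply div_pos _ hN
    have : 0 < lamk1 * (1 - α) := mul_pos hpos hα1'
    nlinarith
  -- KKT: the soft-thresholded gradient on group g is a multiple of βk1
  have key : ∀ i ∈ G g,
      softThresh (fderiv ℝ f βk1 (Pi.single i 1)) (lamk1 * α) = -(K * βk1 i) := by
    intro i hi
    have huniq : ∀ h : Fin m, i ∈ G h → h = g := fun h hh => (hpart i).unique hh hi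
    set x0 := βk1 i with hx0def
    set C := ∑ j ∈ (G g) \ {i}, (βk1 j) ^ 2 with hCdef
    have hsplit : x0 ^ 2 + C = ∑ j ∈ G g, (βk1 j) ^ 2 := by
      rw [hCdef, Finset.sdiff_singleton_eq_erase]
      exact Finset.add_sum_erase (G g) (fun j => (βk1 j) ^ 2) hi
    -- derivative of x ↦ f (update βk1 i x)
    have hγeq : ∀ x : ℝ, (βk1 + (x - βk1 i) • (Pi.single i 1 : Fin p → ℝ)) = Function.update βk1 i x := by
      intro x; funext j
      by_cases hj : j = i
      · subst hj; simp
      · simp [Function.update_of_ne hj, Pi.single_apply, hj]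
    have hγd : HasDerivAt (fun x : ℝ => Function.update βk1 i x) ((Pi.single i 1 : Fin p → ℝ)) x0 := by
      have h1 : HasDerivAt (fun x : ℝ => βk1 + (x - βk1 i) • (Pi.single i 1 : Fin p → ℝ))
          ((1:ℝ) • (Pi.single i 1 : Fin p → ℝ)) x0 :=
        (((hasDerivAt_id x0).sub_const (βk1 i)).smul_const _).const_add βk1
      rw [one_smul] at h1
      exact h1.congr_of_eventuallyEq (Filter.Eventually.of_forall fun x => (hγeq x).symm)
    have hupd0 : Function.update βk1 i x0 = βk1 := Function.update_eq_self i βk1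
    have hfd : HasDerivAt (fun x : ℝ => f (Function.update βk1 i x))
        (fderiv ℝ f βk1 (Pi.single i 1)) x0 := by
      have h1 : HasFDerivAt f (fderiv ℝ f βk1) (Function.update βk1 i x0) := by
        rw [hupd0]; exact (hdiff βk1).hasFDerivAt
      exact h1.comp_hasDerivAt x0 hγd
    -- derivative of the group ℓ2 term
    have hCne : x0 ^ 2 + C ≠ 0 := by rw [hsplit]; exact ne_of_gt hNsq
    have hsqrtval : Real.sqrt (x0 ^ 2 + C) = N := by rw [hsplit]
    have hsq0 : HasDerivAt (fun x : ℝ => x ^ 2 + C) (2 * x0) x0 := by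
      simpa using (hasDerivAt_pow 2 x0).add_const C
    have hsq : HasDerivAt (fun x : ℝ => Real.sqrt (x ^ 2 + C))
        (1 / (2 * Real.sqrt (x0 ^ 2 + C)) * (2 * x0)) x0 :=
      (Real.hasDerivAt_sqrt hCne).comp x0 hsq0
    -- the smooth part h and its derivative
    have hhd : HasDerivAt (fun x : ℝ => f (Function.update βk1 i x)
        + lamk1 * (1 - α) * Real.sqrt ((G g).card) * Real.sqrt (x ^ 2 + C))
        (fderiv ℝ f βk1 (Pi.single i 1) + K * x0) x0 := by
      have h2 := hfd.add (hsq.const_mul (lamk1 * (1 - α) * Real.sqrt ((G g).card)))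
      have heq : fderiv ℝ f βk1 (Pi.single i 1)
          + lamk1 * (1 - α) * Real.sqrt ((G g).card) * (1 / (2 * Real.sqrt (x0 ^ 2 + C)) * (2 * x0))
          = fderiv ℝ f βk1 (Pi.single i 1) + K * x0 := by
        rw [hsqrtval, hKdef]
        field_simp
      rw [← heq]
      exact h2
    -- minimality in the single coordinate
    have hmin1 : ∀ x : ℝ,
        (f (Function.update βk1 i x0)
          + lamk1 * (1 - α) * Real.sqrt ((G g).card) * Real.sqrt (x0 ^ 2 + C))
          + (lamk1 * α) * |x0|
        ≤ (f (Function.update βk1 i x)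
          + lamk1 * (1 - α) * Real.sqrt ((G g).card) * Real.sqrt (x ^ 2 + C))
          + (lamk1 * α) * |x| := by
      intro x
      have hm := hmink1 (Function.update βk1 i x)
      rw [← hupd0] at hm
      rw [Function.update_idem] at hm
      have hd := sgl_update_sub G α hi huniq βk1 x x0
      have h2 : lamk1 * sglNorm G α (Function.update βk1 i x)
          = lamk1 * sglNorm G α (Function.update βk1 i x0)
            + lamk1 * α * |x| - lamk1 * α * |x0|
            + lamk1 * (1 - α) * Real.sqrt ((G g).card) * Real.sqrt (x ^ 2 + C)
            - lamk1 * (1 - α) * Real.sqrt ((G g).card) * Real.sqrt (x0 ^ 2 + C) := by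
        rw [← hCdef] at hd
        linear_combination lamk1 * hd
      nlinarith [hm, h2]
    obtain ⟨hzero, hnonzero⟩ := key1d hhd hmin1
    by_cases hx0 : x0 = 0
    · rw [hx0, mul_zero, neg_zero]
      apply softThresh_of_abs_le
      have := hzero hx0
      rw [hx0, mul_zero, add_zero] at this
      exact this
    · have hval := hnonzero hx0
      have hc : fderiv ℝ f βk1 (Pi.single i 1)
          = -(lamk1 * α * Real.sign x0) - K * x0 := by linarith [hval]
      rw [hc]
      exact softThresh_shift (by positivity) hK hx0
  -- norm of the soft-thresholded gradient vector on group g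
  have hA : (0:ℝ) ≤ lamk1 * (1 - α) * Real.sqrt ((G g).card) := by positivity
  have hsum_s : ∑ i ∈ G g, (softThresh (fderiv ℝ f βk1 (Pi.single i 1)) (lamk1 * α)) ^ 2
      = (lamk1 * (1 - α) * Real.sqrt ((G g).card)) ^ 2 := by
    rw [Finset.sum_congr rfl (fun i hi => by rw [key i hi])]
    have : ∀ i ∈ G g, (-(K * βk1 i)) ^ 2 = K ^ 2 * (βk1 i) ^ 2 := by intro i _; ring
    rw [Finset.sum_congr rfl this, ← Finset.mul_sum, ← hN2, hKdef]
    field_simp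
  have hnorm_s : Real.sqrt (∑ i ∈ G g,
      (softThresh (fderiv ℝ f βk1 (Pi.single i 1)) (lamk1 * α)) ^ 2)
      = lamk1 * (1 - α) * Real.sqrt ((G g).card) := by
    rw [hsum_s, Real.sqrt_sq hA]
  -- Euclidean triangle inequality on the group
  set u : EuclideanSpace ℝ {x // x ∈ G g} :=
    WithLp.toLp 2 (fun j => softThresh (fderiv ℝ f βk1 (Pi.single (j : Fin p) 1)) (lamk1 * α)) with hudef
  set v : EuclideanSpace ℝ {x // x ∈ G g} :=
    WithLp.toLp 2 (fun j => softThresh (fderiv ℝ f βk (Pi.single (j : Fin p) 1)) (lamk * α)) with hvdef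
  have hnu : ‖u‖ = Real.sqrt (∑ i ∈ G g,
      (softThresh (fderiv ℝ f βk1 (Pi.single i 1)) (lamk1 * α)) ^ 2) := by
    rw [EuclideanSpace.norm_eq]
    congr 1
    rw [← Finset.sum_coe_sort (G g)
      (fun i => (softThresh (fderiv ℝ f βk1 (Pi.single i 1)) (lamk1 * α)) ^ 2)]
    apply Finset.sum_congr rfl
    intro j _
    rw [hudef, Real.norm_eq_abs, sq_abs]
  have hnv : ‖v‖ = Real.sqrt (∑ i ∈ G g,
      (softThresh (fderiv ℝ f βk (Pi.single i 1)) (lamk * α)) ^ 2) := by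
    rw [EuclideanSpace.norm_eq]
    congr 1
    rw [← Finset.sum_coe_sort (G g)
      (fun i => (softThresh (fderiv ℝ f βk (Pi.single i 1)) (lamk * α)) ^ 2)]
    apply Finset.sum_congr rfl
    intro j _
    rw [hvdef, Real.norm_eq_abs, sq_abs]
  have hnuv : ‖u - v‖ = Real.sqrt (∑ i ∈ G g,
      (softThresh (fderiv ℝ f βk1 (Pi.single i 1)) (lamk1 * α)
        - softThresh (fderiv ℝ f βk (Pi.single i 1)) (lamk * α)) ^ 2) := by
    rw [EuclideanSpace.norm_eq]
    congr 1
    rw [← Finset.sum_coe_sort (G g)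
      (fun i => (softThresh (fderiv ℝ f βk1 (Pi.single i 1)) (lamk1 * α)
        - softThresh (fderiv ℝ f βk (Pi.single i 1)) (lamk * α)) ^ 2)]
    apply Finset.sum_congr rfl
    intro j _
    rw [Real.norm_eq_abs, sq_abs]
    congr 1
  have htri : ‖u‖ ≤ ‖u - v‖ + ‖v‖ := by
    calc ‖u‖ = ‖u - v + v‖ := by rw [sub_add_cancel]
    _ ≤ ‖u - v‖ + ‖v‖ := norm_add_le _ _
  rw [hnu, hnorm_s, hnuv, hnv] at htri
  nlinarith [htri, hlip, hscreen]
end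

section
/- (Representation of the aSGL norm via the dual ε-norm, Proposition 3.2 of the paper.) Let β ∈ ℝ^p with β^{(g)} ≠ 0 for every group g, let α ∈ (0,1), and let v ∈ ℝ^p, w ∈ ℝ^m have strictly positive entries. Define, for each g, γ_g = α‖v^{(g)}‖₁ − α(∑_{i,j ∈ G_g, i ≠ j} v_j |β_i|)/‖β^{(g)}‖₁ + (1−α) w_g √p_g and ε'_g = (1−α) w_g √p_g / γ_g. Then γ_g > 0, ε'_g ∈ (0,1], and α ∑_{i=1}^p v_i |β_i| + (1−α) ∑_{g=1}^m w_g √p_g ‖β^{(g)}‖₂ = ∑_{g=1}^m γ_g [ (1 − ε'_g) ‖β^{(g)}‖₁ + ε'_g ‖β^{(g)}‖₂ ]. -/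
open scoped BigOperators

/-- Representation of the aSGL norm via the dual ε-norm: with `γ_g` and `ε'_g` as defined,
`γ_g > 0`, `ε'_g ∈ (0,1]`, and the aSGL norm equals `∑_g γ_g[(1-ε'_g)‖β^{(g)}‖₁ + ε'_g‖β^{(g)}‖₂]`. -/
theorem asgl_e_norm_representation
    {p m : ℕ} (G : Fin m → Finset (Fin p))
    (hpart : ∀ i : Fin p, ∃! g : Fin m, i ∈ G g)
    (α : ℝ) (hα : α ∈ Set.Ioo (0:ℝ) 1)
    (v : Fin p → ℝ) (hv : ∀ i, 0 < v i)
    (w : Fin m → ℝ) (hw : ∀ g, 0 < w g)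
    (β : Fin p → ℝ) (hβ : ∀ g : Fin m, ∃ i ∈ G g, β i ≠ 0)
    (γ ε' : Fin m → ℝ)
    (hγ : ∀ g, γ g = α * (∑ i ∈ G g, v i)
        - α * (∑ i ∈ G g, ∑ j ∈ (G g).erase i, v j * |β i|) / (∑ i ∈ G g, |β i|)
        + (1 - α) * w g * Real.sqrt ((G g).card))
    (hε : ∀ g, ε' g = (1 - α) * w g * Real.sqrt ((G g).card) / γ g) :
    (∀ g, 0 < γ g) ∧ (∀ g, ε' g ∈ Set.Ioc (0:ℝ) 1) ∧
    α * ∑ i, v i * |β i| +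
        (1 - α) * ∑ g, w g * Real.sqrt ((G g).card) * Real.sqrt (∑ i ∈ G g, (β i) ^ 2)
      = ∑ g, γ g * ((1 - ε' g) * (∑ i ∈ G g, |β i|)
          + ε' g * Real.sqrt (∑ i ∈ G g, (β i) ^ 2)) := by
  classical
  obtain ⟨hα0, hα1⟩ := hα
  -- notation
  set S1 : Fin m → ℝ := fun g => ∑ i ∈ G g, |β i| with hS1
  set P : Fin m → ℝ := fun g => ∑ i ∈ G g, v i * |β i| with hP
  set c : Fin m → ℝ := fun g => (1 - α) * w g * Real.sqrt ((G g).card) with hc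
  have hS1pos : ∀ g, 0 < S1 g := by
    intro g
    obtain ⟨i, hi, hbi⟩ := hβ g
    exact Finset.sum_pos' (fun j _ => abs_nonneg _) ⟨i, hi, abs_pos.mpr hbi⟩
  have hPpos : ∀ g, 0 < P g := by
    intro g
    obtain ⟨i, hi, hbi⟩ := hβ g
    exact Finset.sum_pos' (fun j _ => mul_nonneg (hv j).le (abs_nonneg _))
      ⟨i, hi, mul_pos (hv i) (abs_pos.mpr hbi)⟩
  have hcpos : ∀ g, 0 < c g := by
    intro g
    obtain ⟨i, hi, _⟩ := hβ g
    have hcard : 0 < (G g).card := Finset.card_pos.mpr ⟨i, hi⟩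
    have : (0:ℝ) < Real.sqrt ((G g).card) :=
      Real.sqrt_pos.mpr (by exact_mod_cast hcard)
    exact mul_pos (mul_pos (by linarith) (hw g)) this
  -- the double-sum identity
  have hT : ∀ g, (∑ i ∈ G g, ∑ j ∈ (G g).erase i, v j * |β i|)
      = (∑ i ∈ G g, v i) * S1 g - P g := by
    intro g
    have : ∀ i ∈ G g, (∑ j ∈ (G g).erase i, v j * |β i|)
        = (∑ j ∈ G g, v j) * |β i| - v i * |β i| := by
      intro i hi
      rw [← Finset.sum_mul, Finset.sum_erase_eq_sub hi, sub_mul]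
    rw [Finset.sum_congr rfl this, Finset.sum_sub_distrib]
    simp only [hS1, hP, ← Finset.mul_sum]
  -- simplified formula for γ
  have hγ' : ∀ g, γ g = α * P g / S1 g + c g := by
    intro g
    rw [hγ g, hT g]
    have h := (hS1pos g).ne'
    change α * _ - α * ((∑ i ∈ G g, v i) * S1 g - P g) / S1 g + c g = _
    field_simp
    ring
  have hγpos : ∀ g, 0 < γ g := by
    intro g
    rw [hγ' g]
    have := div_pos (mul_pos hα0 (hPpos g)) (hS1pos g)
    linarith [hcpos g]
  have hεmem : ∀ g, ε' g ∈ Set.Ioc (0:ℝ) 1 := by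
    intro g
    rw [hε g]
    constructor
    · exact div_pos (hcpos g) (hγpos g)
    · rw [div_le_one (hγpos g), hγ' g]
      have h2 := (div_pos (mul_pos hα0 (hPpos g)) (hS1pos g)).le
      have h3 : (1 - α) * w g * Real.sqrt ((G g).card) = c g := rfl
      linarith
  refine ⟨hγpos, hεmem, ?_⟩
  -- per-group identity
  have hgroup : ∀ g, γ g * ((1 - ε' g) * S1 g + ε' g * Real.sqrt (∑ i ∈ G g, (β i) ^ 2))
      = α * P g + c g * Real.sqrt (∑ i ∈ G g, (β i) ^ 2) := by
    intro g
    have hγne := (hγpos g).ne'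
    have hce : γ g * ε' g = c g := by
      rw [hε g]; field_simp; rfl
    have h1 : γ g * (1 - ε' g) = α * P g / S1 g := by
      rw [mul_sub, mul_one, hce, hγ' g]; ring
    calc γ g * ((1 - ε' g) * S1 g + ε' g * Real.sqrt (∑ i ∈ G g, (β i) ^ 2))
        = (γ g * (1 - ε' g)) * S1 g + (γ g * ε' g) * Real.sqrt (∑ i ∈ G g, (β i) ^ 2) := by
          ring
      _ = α * P g / S1 g * S1 g + c g * Real.sqrt (∑ i ∈ G g, (β i) ^ 2) := by
          rw [h1, hce]
      _ = α * P g + c g * Real.sqrt (∑ i ∈ G g, (β i) ^ 2) := by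
          rw [div_mul_cancel₀ _ (hS1pos g).ne']
  -- partition sum
  have hpartsum : ∑ i, v i * |β i| = ∑ g, P g := by
    set σ : Fin p → Fin m := fun i => (hpart i).choose with hσ
    have hfib : ∀ g, G g = Finset.univ.filter (fun i => σ i = g) := by
      intro g
      ext i
      simp only [Finset.mem_filter, Finset.mem_univ, true_and]
      constructor
      · intro hi; exact ((hpart i).choose_spec.2 g hi).symm
      · intro h; rw [← h]; exact (hpart i).choose_spec.1
    simp only [hP, hfib]
    exact (Finset.sum_fiberwise_of_maps_to (fun x _ => Finset.mem_univ (σ x)) _).symm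
  rw [Finset.sum_congr rfl (fun g _ => hgroup g), Finset.sum_add_distrib, hpartsum]
  congr 1
  · rw [Finset.mul_sum]
  · simp only [hc]
    rw [Finset.mul_sum]
    exact Finset.sum_congr rfl (fun g _ => by ring)
end

section
/- (aSGL KKT check.) Let β̂ be a minimizer of β ↦ f(β) + λ‖β‖_asgl over ℝ^p, where f : ℝ^p → ℝ is convex and differentiable, λ > 0, and the weights satisfy v_i ≥ 0, w_g ≥ 0. If i ∈ G_g and β̂_i = 0, then |S(∇_i f(β̂), λ(1−α) w_g √p_g)| ≤ λ α v_i, where S(a,b) = sign(a)(|a|−b)₊ is the soft-thresholding operator. -/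
open scoped BigOperators

noncomputable def asglNorm {p m : ℕ} (G : Fin m → Finset (Fin p)) (α : ℝ)
    (v : Fin p → ℝ) (w : Fin m → ℝ) (β : Fin p → ℝ) : ℝ :=
  α * ∑ i, v i * |β i| +
    (1 - α) * ∑ g, w g * Real.sqrt ((G g).card) * Real.sqrt (∑ i ∈ G g, (β i) ^ 2)

lemma deriv_abs_bound {φ : ℝ → ℝ} {D C : ℝ} (h : HasDerivAt φ D 0)
    (hb : ∀ t : ℝ, φ 0 - C * |t| ≤ φ t) : |D| ≤ C := by
  have hs := hasDerivAt_iff_tendsto_slope.1 h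
  rw [abs_le]
  constructor
  · have hpos : Filter.Tendsto (slope φ 0) (nhdsWithin 0 (Set.Ioi 0)) (nhds D) :=
      hs.mono_left (nhdsWithin_mono 0 (fun x hx => ne_of_gt hx))
    refine ge_of_tendsto hpos ?_
    filter_upwards [self_mem_nhdsWithin] with t (ht : (0:ℝ) < t)
    have h1 := hb t
    rw [abs_of_pos ht] at h1
    rw [slope_def_field, sub_zero, le_div_iff₀ ht]
    linarith
  · have hneg : Filter.Tendsto (slope φ 0) (nhdsWithin 0 (Set.Iio 0)) (nhds D) :=
      hs.mono_left (nhdsWithin_mono 0 (fun x hx => ne_of_lt hx))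
    refine le_of_tendsto hneg ?_
    filter_upwards [self_mem_nhdsWithin] with t (ht : t < (0:ℝ))
    have h1 := hb t
    rw [abs_of_neg ht] at h1
    rw [slope_def_field, sub_zero, div_le_iff_of_neg ht]
    linarith

/-- aSGL KKT check: if variable `i` (in group `g`) is inactive at a minimizer, then
`|S(∇_i f(β̂), λ(1-α)w_g√p_g)| ≤ λαv_i`. -/
theorem asgl_kkt_check
    {p m : ℕ} (G : Fin m → Finset (Fin p))
    (hpart : ∀ i : Fin p, ∃! g : Fin m, i ∈ G g)
    (α : ℝ) (hα : α ∈ Set.Icc (0:ℝ) 1)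
    (v : Fin p → ℝ) (hv : ∀ i, 0 ≤ v i)
    (w : Fin m → ℝ) (hw : ∀ g, 0 ≤ w g)
    (f : (Fin p → ℝ) → ℝ)
    (hconv : ConvexOn ℝ Set.univ f) (hdiff : Differentiable ℝ f)
    (lam : ℝ) (hlam : 0 < lam)
    (βhat : Fin p → ℝ)
    (hmin : ∀ b : Fin p → ℝ,
      f βhat + lam * asglNorm G α v w βhat ≤ f b + lam * asglNorm G α v w b)
    (g : Fin m) (i : Fin p) (hi : i ∈ G g) (h0 : βhat i = 0) :
    |softThresh (fderiv ℝ f βhat (Pi.single i 1))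
        (lam * (1 - α) * w g * Real.sqrt ((G g).card))| ≤ lam * α * v i := by
  obtain ⟨hα0, hα1⟩ := hα
  set e : Fin p → ℝ := Pi.single i 1 with he
  set D : ℝ := fderiv ℝ f βhat e with hD
  set sq : ℝ := Real.sqrt ((G g).card) with hsq
  have hsq0 : 0 ≤ sq := Real.sqrt_nonneg _
  set C : ℝ := lam * (α * v i + (1 - α) * (w g * sq)) with hC
  -- the perturbed point equals an update
  have hup : ∀ t : ℝ, βhat + t • e = Function.update βhat i t := by
    intro t
    funext j
    by_cases hj : j = i
    · subst hj; simp [he, h0]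
    · simp [he, hj, Pi.single_eq_of_ne hj, Function.update_of_ne hj]
  -- norm bound
  have hnorm : ∀ t : ℝ, asglNorm G α v w (Function.update βhat i t)
      ≤ asglNorm G α v w βhat + (α * v i + (1 - α) * (w g * sq)) * |t| := by
    intro t
    have hS1 : ∑ j, v j * |Function.update βhat i t j|
        = v i * |t| + ∑ j ∈ Finset.univ.erase i, v j * |βhat j| := by
      rw [← Finset.add_sum_erase _ _ (Finset.mem_univ i)]
      simp only [Function.update_self]
      congr 1
      refine Finset.sum_congr rfl fun j hj => ?_
      rw [Function.update_of_ne (Finset.ne_of_mem_erase hj)]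
    have hS1' : ∑ j, v j * |βhat j|
        = ∑ j ∈ Finset.univ.erase i, v j * |βhat j| := by
      rw [← Finset.add_sum_erase _ _ (Finset.mem_univ i), h0]
      simp
    -- group sums
    have hgroup : ∀ g' : Fin m, g' ≠ g →
        (∑ j ∈ G g', (Function.update βhat i t j) ^ 2) = ∑ j ∈ G g', (βhat j) ^ 2 := by
      intro g' hne
      refine Finset.sum_congr rfl fun j hj => ?_
      have hji : j ≠ i := by
        rintro rfl
        exact hne ((hpart j).unique hj hi)
      rw [Function.update_of_ne hji]
    have hSg : ∑ j ∈ G g, (Function.update βhat i t j) ^ 2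
        = t ^ 2 + ∑ j ∈ (G g).erase i, (βhat j) ^ 2 := by
      rw [← Finset.add_sum_erase _ _ hi]
      simp only [Function.update_self]
      congr 1
      refine Finset.sum_congr rfl fun j hj => ?_
      rw [Function.update_of_ne (Finset.ne_of_mem_erase hj)]
    have hSg' : ∑ j ∈ G g, (βhat j) ^ 2 = ∑ j ∈ (G g).erase i, (βhat j) ^ 2 := by
      rw [← Finset.add_sum_erase _ _ hi, h0]
      simp
    set S : ℝ := ∑ j ∈ (G g).erase i, (βhat j) ^ 2 with hSdef
    have hS0 : 0 ≤ S := Finset.sum_nonneg fun j _ => sq_nonneg _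
    have hsqrt : Real.sqrt (t ^ 2 + S) ≤ Real.sqrt S + |t| := by
      rw [show Real.sqrt S + |t| = Real.sqrt ((Real.sqrt S + |t|) ^ 2) from
        (Real.sqrt_sq (by positivity)).symm]
      apply Real.sqrt_le_sqrt
      have : Real.sqrt S ^ 2 = S := Real.sq_sqrt hS0
      nlinarith [sq_abs t, mul_nonneg (Real.sqrt_nonneg S) (abs_nonneg t)]
    -- sum over groups difference
    have hT : ∑ g', w g' * Real.sqrt ((G g').card) *
          Real.sqrt (∑ j ∈ G g', (Function.update βhat i t j) ^ 2)
        ≤ (∑ g', w g' * Real.sqrt ((G g').card) * Real.sqrt (∑ j ∈ G g', (βhat j) ^ 2))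
          + w g * sq * |t| := by
      have key : ∑ g', (w g' * Real.sqrt ((G g').card) *
            Real.sqrt (∑ j ∈ G g', (Function.update βhat i t j) ^ 2)
          - w g' * Real.sqrt ((G g').card) * Real.sqrt (∑ j ∈ G g', (βhat j) ^ 2))
          = w g * sq * Real.sqrt (t ^ 2 + S) - w g * sq * Real.sqrt S := by
        rw [Finset.sum_eq_single_of_mem g (Finset.mem_univ g)]
        · rw [hSg, hSg', ← hsq]
        · intro g' _ hne
          rw [hgroup g' hne]
          ring
      have key2 : w g * sq * Real.sqrt (t ^ 2 + S) - w g * sq * Real.sqrt S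
          ≤ w g * sq * |t| := by
        have := mul_le_mul_of_nonneg_left hsqrt (mul_nonneg (hw g) hsq0)
        nlinarith
      have := Finset.sum_sub_distrib (s := (Finset.univ : Finset (Fin m)))
        (f := fun g' => w g' * Real.sqrt ((G g').card) *
            Real.sqrt (∑ j ∈ G g', (Function.update βhat i t j) ^ 2))
        (g := fun g' => w g' * Real.sqrt ((G g').card) * Real.sqrt (∑ j ∈ G g', (βhat j) ^ 2))
      rw [this] at key
      linarith
    simp only [asglNorm, hS1, hS1']
    have h1α : 0 ≤ 1 - α := by linarith
    have := mul_le_mul_of_nonneg_left hT h1α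
    nlinarith [mul_nonneg (hv i) (abs_nonneg t), mul_nonneg hα0 (mul_nonneg (hv i) (abs_nonneg t))]
  -- derivative
  set φ : ℝ → ℝ := fun t => f (Function.update βhat i t) with hφ
  have hφ0 : φ 0 = f βhat := by
    simp only [hφ]
    congr 1
    rw [← hup 0]
    simp
  have hderiv : HasDerivAt φ D 0 := by
    have hL : HasDerivAt (fun t : ℝ => βhat + t • e) ((1:ℝ) • e) 0 :=
      ((hasDerivAt_id (0:ℝ)).smul_const e).const_add βhat
    have hcomp := (hdiff (βhat + (0:ℝ) • e)).hasFDerivAt.comp_hasDerivAt 0 hL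
    simp only [zero_smul, add_zero, one_smul] at hcomp
    simpa only [Function.comp_def, hup] using hcomp
  -- lower bound from minimality
  have hlow : ∀ t : ℝ, φ 0 - C * |t| ≤ φ t := by
    intro t
    have h1 := hmin (Function.update βhat i t)
    have h2 := mul_le_mul_of_nonneg_left (hnorm t) (le_of_lt hlam)
    rw [hφ0, hφ, hC]
    nlinarith
  have hDb : |D| ≤ C := deriv_abs_bound hderiv hlow
  -- finish
  set b : ℝ := lam * (1 - α) * w g * sq with hb
  have hb0 : 0 ≤ b := by
    rw [hb]
    have h1 : (0:ℝ) ≤ 1 - α := by linarith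
    exact mul_nonneg (mul_nonneg (mul_nonneg hlam.le h1) (hw g)) hsq0
  have hCb : C = lam * α * v i + b := by rw [hC, hb]; ring
  have hvi0 : 0 ≤ lam * α * v i := mul_nonneg (mul_nonneg hlam.le hα0) (hv i)
  have habs : |softThresh D b| ≤ max (|D| - b) 0 := by
    rw [softThresh, abs_mul]
    have hmax0 : 0 ≤ max (|D| - b) 0 := le_max_right _ _
    rw [abs_of_nonneg hmax0]
    have hsign : |Real.sign D| ≤ 1 := by
      rcases lt_trichotomy D 0 with h | h | h
      · rw [Real.sign_of_neg h]; simp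
      · rw [h, Real.sign_zero]; simp
      · rw [Real.sign_of_pos h]; simp
    nlinarith
  refine habs.trans (max_le ?_ hvi0)
  rw [hCb] at hDb
  linarith
end

section
/- (Theoretical aSGL variable screening.) Let β̂ be a minimizer of β ↦ f(β) + λ‖β‖_asgl over ℝ^p, where f : ℝ^p → ℝ is convex and differentiable, λ > 0, with weights v_i ≥ 0 and w_g ≥ 0. Let g be a group with β̂^{(g)} ≠ 0 and let i ∈ G_g. Then: (i) if β̂_i = 0, then |∇_i f(β̂)| ≤ λ α v_i; (ii) if moreover α < 1 and w_g > 0, then β̂_i ≠ 0 implies |∇_i f(β̂)| > λ α v_i. Hence within an active group, variable i is active if and only if |∇_i f(β̂)| > λ α v_i. -/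
open scoped BigOperators

/-- Theoretical aSGL variable screening: within an active group, for `α < 1` and `w_g > 0`,
variable `i` is active iff `|∇_i f(β̂)| > λαv_i`. -/
theorem asgl_theoretical_variable_screening
    {p m : ℕ} (G : Fin m → Finset (Fin p))
    (hpart : ∀ i : Fin p, ∃! g : Fin m, i ∈ G g)
    (α : ℝ) (hα : α ∈ Set.Icc (0:ℝ) 1)
    (v : Fin p → ℝ) (hv : ∀ i, 0 ≤ v i)
    (w : Fin m → ℝ) (hw : ∀ g, 0 ≤ w g)
    (f : (Fin p → ℝ) → ℝ)
    (hconv : ConvexOn ℝ Set.univ f) (hdiff : Differentiable ℝ f)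
    (lam : ℝ) (hlam : 0 < lam)
    (βhat : Fin p → ℝ)
    (hmin : ∀ b : Fin p → ℝ,
      f βhat + lam * asglNorm G α v w βhat ≤ f b + lam * asglNorm G α v w b)
    (g : Fin m) (hactive : ∃ j ∈ G g, βhat j ≠ 0)
    (i : Fin p) (hi : i ∈ G g) :
    (βhat i = 0 → |fderiv ℝ f βhat (Pi.single i 1)| ≤ lam * α * v i) ∧
    (α < 1 → 0 < w g → βhat i ≠ 0 →
      lam * α * v i < |fderiv ℝ f βhat (Pi.single i 1)|) := by
  obtain ⟨hα0, hα1⟩ := hα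
  set e : Fin p → ℝ := Pi.single i 1 with he
  set D : ℝ := fderiv ℝ f βhat e with hDdef
  set A : ℝ := α * ∑ j ∈ Finset.univ.erase i, v j * |βhat j| +
      (1 - α) * ∑ g' ∈ Finset.univ.erase g,
        w g' * Real.sqrt ((G g').card) * Real.sqrt (∑ j ∈ G g', (βhat j) ^ 2) with hAdef
  set B : ℝ := (1 - α) * (w g * Real.sqrt ((G g).card)) with hBdef
  set R : ℝ := ∑ j ∈ (G g).erase i, (βhat j) ^ 2 with hRdef
  have hβt : ∀ (t : ℝ) (j : Fin p), j ≠ i → (βhat + t • e) j = βhat j := by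
    intro t j hj
    simp [he, Pi.single_apply, hj]
  have hβti : ∀ t : ℝ, (βhat + t • e) i = βhat i + t := by
    intro t; simp [he]
  -- the norm along the line
  have hnorm : ∀ t : ℝ, asglNorm G α v w (βhat + t • e) =
      A + α * (v i * |βhat i + t|) + B * Real.sqrt (R + (βhat i + t) ^ 2) := by
    intro t
    have h1 : ∑ j, v j * |(βhat + t • e) j| =
        v i * |βhat i + t| + ∑ j ∈ Finset.univ.erase i, v j * |βhat j| := by
      rw [← Finset.add_sum_erase _ _ (Finset.mem_univ i), hβti]
      congr 1
      exact Finset.sum_congr rfl fun j hj => by rw [hβt t j (Finset.ne_of_mem_erase hj)]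
    have h2 : ∑ j ∈ G g, ((βhat + t • e) j) ^ 2 = (βhat i + t) ^ 2 + R := by
      rw [← Finset.add_sum_erase _ _ hi, hβti]
      congr 1
      exact Finset.sum_congr rfl fun j hj => by rw [hβt t j (Finset.ne_of_mem_erase hj)]
    have h3 : ∑ g', w g' * Real.sqrt ((G g').card) *
          Real.sqrt (∑ j ∈ G g', ((βhat + t • e) j) ^ 2) =
        w g * Real.sqrt ((G g).card) * Real.sqrt (R + (βhat i + t) ^ 2) +
          ∑ g' ∈ Finset.univ.erase g,
            w g' * Real.sqrt ((G g').card) * Real.sqrt (∑ j ∈ G g', (βhat j) ^ 2) := by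
      rw [← Finset.add_sum_erase _ _ (Finset.mem_univ g), h2, add_comm ((βhat i + t) ^ 2) R]
      congr 1
      refine Finset.sum_congr rfl fun g' hg' => ?_
      have hne : g' ≠ g := Finset.ne_of_mem_erase hg'
      congr 2
      refine Finset.sum_congr rfl fun j hj => ?_
      have hji : j ≠ i := by
        rintro rfl
        exact hne ((hpart j).unique hj hi)
      rw [hβt t j hji]
    unfold asglNorm
    rw [h1, h3, hAdef, hBdef]
    ring
  have hnorm0 : asglNorm G α v w βhat =
      A + α * (v i * |βhat i|) + B * Real.sqrt (R + (βhat i) ^ 2) := by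
    have h := hnorm 0
    simpa using h
  -- minimality along the line
  have hline : ∀ t : ℝ,
      f βhat + lam * (A + α * (v i * |βhat i|) + B * Real.sqrt (R + (βhat i) ^ 2)) ≤
      f (βhat + t • e) + lam * (A + α * (v i * |βhat i + t|) +
        B * Real.sqrt (R + (βhat i + t) ^ 2)) := by
    intro t
    have h := hmin (βhat + t • e)
    rwa [hnorm t, hnorm0] at h
  -- derivative of f along the line
  have hφ : HasDerivAt (fun t : ℝ => f (βhat + t • e)) D 0 := by
    have hl : HasDerivAt (fun t : ℝ => βhat + t • e) e 0 := by
      simpa using ((hasDerivAt_id (0:ℝ)).smul_const e).const_add βhat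
    have h := (hdiff (βhat + (0:ℝ) • e)).hasFDerivAt.comp_hasDerivAt 0 hl
    simp only [zero_smul, add_zero] at h
    rw [hDdef]
    exact h
  have hR0 : 0 ≤ R := Finset.sum_nonneg fun j _ => sq_nonneg _
  have hcard : 0 < Real.sqrt ((G g).card) := by
    have hc : 0 < (G g).card := Finset.card_pos.2 ⟨i, hi⟩
    exact Real.sqrt_pos.2 (by exact_mod_cast hc)
  have hvi : 0 ≤ v i := hv i
  constructor
  · -- part (i)
    intro h0
    have hRpos : 0 < R := by
      obtain ⟨j, hjg, hjne⟩ := hactive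
      have hji : j ≠ i := by rintro rfl; exact hjne h0
      have hjmem : j ∈ (G g).erase i := Finset.mem_erase.2 ⟨hji, hjg⟩
      have hsq : (0:ℝ) < (βhat j) ^ 2 := by positivity
      calc (0:ℝ) < (βhat j) ^ 2 := hsq
        _ ≤ R := Finset.single_le_sum (f := fun j => (βhat j) ^ 2)
            (fun k _ => sq_nonneg _) hjmem
    set θ : ℝ → ℝ := fun t => f (βhat + t • e) +
        lam * (A + B * Real.sqrt (R + (βhat i + t) ^ 2)) with hθdef
    have hu : HasDerivAt (fun t : ℝ => R + (βhat i + t) ^ 2) (2 * (βhat i + 0)) 0 := by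
      have h1 : HasDerivAt (fun t : ℝ => βhat i + t) 1 0 := (hasDerivAt_id 0).const_add _
      have h2 := (h1.pow 2).const_add R
      simpa using h2
    have hargpos : 0 < R + (βhat i + 0) ^ 2 := by nlinarith [sq_nonneg (βhat i + 0)]
    have husqrt : HasDerivAt (fun t : ℝ => Real.sqrt (R + (βhat i + t) ^ 2))
        (2 * (βhat i + 0) / (2 * Real.sqrt (R + (βhat i + 0) ^ 2))) 0 :=
      hu.sqrt (ne_of_gt hargpos)
    have hval : 2 * (βhat i + 0) / (2 * Real.sqrt (R + (βhat i + 0) ^ 2)) = 0 := by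
      rw [h0]; norm_num
    rw [hval] at husqrt
    have hθ : HasDerivAt θ D 0 := by
      have h2 : HasDerivAt (fun t : ℝ =>
          lam * (A + B * Real.sqrt (R + (βhat i + t) ^ 2))) (lam * (B * 0)) 0 :=
        ((husqrt.const_mul B).const_add A).const_mul lam
      have h3 := hφ.add h2
      rw [hθdef]
      simpa [Pi.add_def] using h3
    have hslope : Filter.Tendsto (slope θ 0) (nhdsWithin 0 {(0:ℝ)}ᶜ) (nhds D) :=
      hasDerivAt_iff_tendsto_slope.1 hθ
    have hst : ∀ t : ℝ, t ≠ 0 → slope θ 0 t = (θ t - θ 0) / t := by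
      intro t ht
      rw [slope_def_field]
      rw [div_eq_div_iff (by simpa using sub_ne_zero.2 (Ne.symm ht)) ht]
      ring
    have hkey : ∀ t : ℝ, θ 0 ≤ θ t + lam * (α * (v i * |t|)) := by
      intro t
      have h1 := hline t
      rw [hθdef]
      simp only [h0, zero_smul, add_zero, zero_add, abs_zero, mul_zero, zero_pow,
        ne_eq, OfNat.ofNat_ne_zero, not_false_eq_true] at h1 ⊢
      linarith
    have hDge : -(lam * α * v i) ≤ D := by
      have hsub : nhdsWithin (0:ℝ) (Set.Ioi 0) ≤ nhdsWithin 0 {(0:ℝ)}ᶜ :=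
        nhdsWithin_mono 0 fun x hx => ne_of_gt hx
      refine ge_of_tendsto (hslope.mono_left hsub) ?_
      filter_upwards [self_mem_nhdsWithin] with t ht
      have ht' : (0:ℝ) < t := ht
      rw [hst t (ne_of_gt ht'), le_div_iff₀ ht']
      have h1 := hkey t
      rw [abs_of_pos ht'] at h1
      nlinarith
    have hDle : D ≤ lam * α * v i := by
      have hsub : nhdsWithin (0:ℝ) (Set.Iio 0) ≤ nhdsWithin 0 {(0:ℝ)}ᶜ :=
        nhdsWithin_mono 0 fun x hx => ne_of_lt hx
      refine le_of_tendsto (hslope.mono_left hsub) ?_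
      filter_upwards [self_mem_nhdsWithin] with t ht
      have ht' : t < (0:ℝ) := ht
      rw [hst t (ne_of_lt ht'), div_le_iff_of_neg ht']
      have h1 := hkey t
      rw [abs_of_neg ht'] at h1
      nlinarith
    exact abs_le.2 ⟨hDge, hDle⟩
  · -- part (ii)
    intro hα1' hwg hb0
    have hSpos : 0 < R + (βhat i) ^ 2 := by
      have : 0 < (βhat i) ^ 2 := by positivity
      linarith
    have hS : 0 < Real.sqrt (R + (βhat i) ^ 2) := Real.sqrt_pos.2 hSpos
    have hB' : 0 < B := by
      rw [hBdef]
      have h1 : 0 < 1 - α := by linarith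
      positivity
    set ψ : ℝ → ℝ := fun t => f (βhat + t • e) +
        lam * (A + α * (v i * |βhat i + t|) + B * Real.sqrt (R + (βhat i + t) ^ 2)) with hψdef
    have hlocmin : IsLocalMin ψ 0 := by
      refine Filter.Eventually.of_forall fun t => ?_
      have h1 := hline t
      rw [hψdef]
      simpa using h1
    -- derivative of the abs part
    have hlin : HasDerivAt (fun t : ℝ => βhat i + t) 1 0 := (hasDerivAt_id 0).const_add _
    have htend : Filter.Tendsto (fun t : ℝ => βhat i + t) (nhds 0) (nhds (βhat i)) := by
      simpa using hlin.continuousAt.tendsto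
    obtain ⟨s, hs, habs⟩ : ∃ s : ℝ,
        ((s = 1 ∧ 0 < βhat i) ∨ (s = -1 ∧ βhat i < 0)) ∧
        HasDerivAt (fun t : ℝ => |βhat i + t|) s 0 := by
      rcases lt_or_gt_of_ne hb0 with hneg | hpos
      · refine ⟨-1, Or.inr ⟨rfl, hneg⟩, ?_⟩
        have hev : ∀ᶠ t in nhds (0:ℝ), βhat i + t < 0 :=
          htend.eventually (gt_mem_nhds hneg)
        refine HasDerivAt.congr_of_eventuallyEq hlin.neg ?_
        filter_upwards [hev] with t ht
        rw [abs_of_neg ht]; rfl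
      · refine ⟨1, Or.inl ⟨rfl, hpos⟩, ?_⟩
        have hev : ∀ᶠ t in nhds (0:ℝ), 0 < βhat i + t :=
          htend.eventually (lt_mem_nhds hpos)
        refine HasDerivAt.congr_of_eventuallyEq hlin ?_
        filter_upwards [hev] with t ht
        rw [abs_of_pos ht]
    -- derivative of the sqrt part
    have hu : HasDerivAt (fun t : ℝ => R + (βhat i + t) ^ 2) (2 * (βhat i + 0)) 0 := by
      have h2 := (hlin.pow 2).const_add R
      simpa using h2
    have hargpos : 0 < R + (βhat i + 0) ^ 2 := by
      rw [add_zero]; exact hSpos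
    have husqrt : HasDerivAt (fun t : ℝ => Real.sqrt (R + (βhat i + t) ^ 2))
        (2 * (βhat i + 0) / (2 * Real.sqrt (R + (βhat i + 0) ^ 2))) 0 :=
      hu.sqrt (ne_of_gt hargpos)
    set d : ℝ := βhat i / Real.sqrt (R + (βhat i) ^ 2) with hddef
    have hdval : 2 * (βhat i + 0) / (2 * Real.sqrt (R + (βhat i + 0) ^ 2)) = d := by
      rw [add_zero, hddef, mul_div_mul_left _ _ (two_ne_zero)]
    rw [hdval] at husqrt
    have hψ' : HasDerivAt ψ (D + lam * (α * (v i * s) + B * d)) 0 := by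
      have hin : HasDerivAt (fun t : ℝ =>
          A + α * (v i * |βhat i + t|) + B * Real.sqrt (R + (βhat i + t) ^ 2))
          (α * (v i * s) + B * d) 0 :=
        (((habs.const_mul (v i)).const_mul α).const_add A).add (husqrt.const_mul B)
      have h3 := hφ.add (hin.const_mul lam)
      rw [hψdef]
      exact h3
    have hzero : D + lam * (α * (v i * s) + B * d) = 0 :=
      hlocmin.hasDerivAt_eq_zero hψ'
    have hBd : 0 < lam * B := mul_pos hlam hB'
    rcases hs with ⟨hs1, hbpos⟩ | ⟨hs1, hbneg⟩
    · -- βhat i > 0, s = 1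
      have hd : 0 < d := div_pos hbpos hS
      have hDeq : D = -(lam * (α * (v i * 1) + B * d)) := by
        rw [hs1] at hzero; linear_combination hzero
      have h1 : 0 < B * d := mul_pos hB' hd
      have h2 : 0 ≤ α * (v i * 1) := mul_nonneg hα0 (by simpa using hvi)
      have hpos : 0 < lam * (α * (v i * 1) + B * d) := mul_pos hlam (by linarith)
      rw [hDeq, abs_neg, abs_of_pos hpos]
      have hexp : lam * (α * (v i * 1) + B * d) = lam * α * v i + lam * (B * d) := by ring
      have h3 : 0 < lam * (B * d) := mul_pos hlam h1
      linarith
    · -- βhat i < 0, s = -1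
      have hd : d < 0 := div_neg_of_neg_of_pos hbneg hS
      have hDeq : D = lam * (α * (v i * 1) + B * (-d)) := by
        rw [hs1] at hzero; linear_combination hzero
      have h1 : 0 < B * (-d) := mul_pos hB' (by linarith)
      have h2 : 0 ≤ α * (v i * 1) := mul_nonneg hα0 (by simpa using hvi)
      have hpos : 0 < lam * (α * (v i * 1) + B * (-d)) := mul_pos hlam (by linarith)
      rw [hDeq, abs_of_pos hpos]
      have hexp : lam * (α * (v i * 1) + B * (-d)) = lam * α * v i + lam * (B * (-d)) := by ring
      have h3 : 0 < lam * (B * (-d)) := mul_pos hlam h1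
      linarith
end

section
/- (DFR-aSGL variable screening.) Let f : ℝ^p → ℝ be convex and differentiable, α ∈ [0,1) with α < 1, λ_k ≥ λ_{k+1} > 0, weights v_i ≥ 0 and w_g > 0, and let β̂(λ_k), β̂(λ_{k+1}) be minimizers of β ↦ f(β) + λ‖β‖_asgl at λ_k and λ_{k+1}. Let g be a group active at λ_{k+1} (β̂^{(g)}(λ_{k+1}) ≠ 0) and let i ∈ G_g. Assume the Lipschitz condition |∇_i f(β̂(λ_{k+1})) − ∇_i f(β̂(λ_k))| ≤ α v_i (λ_k − λ_{k+1}). If |∇_i f(β̂(λ_k))| ≤ α v_i (2λ_{k+1} − λ_k), then β̂_i(λ_{k+1}) = 0. -/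
open scoped BigOperators

/-- DFR-aSGL variable screening: under the variable-level Lipschitz condition, a variable in
an active group that passes the screening test is inactive at `λ_{k+1}`. -/
theorem dfr_asgl_variable_screening
    {p m : ℕ} (G : Fin m → Finset (Fin p))
    (hpart : ∀ i : Fin p, ∃! g : Fin m, i ∈ G g)
    (α : ℝ) (hα : α ∈ Set.Ico (0:ℝ) 1)
    (v : Fin p → ℝ) (hv : ∀ i, 0 ≤ v i)
    (w : Fin m → ℝ) (hw : ∀ g, 0 < w g)
    (f : (Fin p → ℝ) → ℝ)
    (hconv : ConvexOn ℝ Set.univ f) (hdiff : Differentiable ℝ f)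
    (lamk lamk1 : ℝ) (hord : lamk1 ≤ lamk) (hpos : 0 < lamk1)
    (βk βk1 : Fin p → ℝ)
    (hmink : ∀ b : Fin p → ℝ,
      f βk + lamk * asglNorm G α v w βk ≤ f b + lamk * asglNorm G α v w b)
    (hmink1 : ∀ b : Fin p → ℝ,
      f βk1 + lamk1 * asglNorm G α v w βk1 ≤ f b + lamk1 * asglNorm G α v w b)
    (g : Fin m) (hactive : ∃ j ∈ G g, βk1 j ≠ 0)
    (i : Fin p) (hi : i ∈ G g)
    (hlip : |fderiv ℝ f βk1 (Pi.single i 1) - fderiv ℝ f βk (Pi.single i 1)|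
      ≤ α * v i * (lamk - lamk1))
    (hscreen : |fderiv ℝ f βk (Pi.single i 1)| ≤ α * v i * (2 * lamk1 - lamk)) :
    βk1 i = 0 := by
  classical
  by_contra hne
  obtain ⟨hα0, hα1⟩ := hα
  set u : Fin p → ℝ := Pi.single i 1 with hu
  have hui : u i = 1 := by simp [hu]
  have hujz : ∀ j : Fin p, j ≠ i → u j = 0 := by
    intro j hj; simp [hu, Pi.single_eq_of_ne hj]
  have h0 : βk1 + (0:ℝ) • u = βk1 := by simp
  -- positivity of the group norm
  have hQpos : 0 < ∑ j ∈ G g, (βk1 j) ^ 2 := by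
    have h1 : (βk1 i) ^ 2 ≤ ∑ j ∈ G g, (βk1 j) ^ 2 :=
      Finset.single_le_sum (f := fun j => (βk1 j) ^ 2) (fun j _ => sq_nonneg _) hi
    have h2 : (βk1 i) ^ 2 ≠ 0 := pow_ne_zero 2 hne
    have h3 := (sq_nonneg (βk1 i)).lt_of_ne (Ne.symm h2)
    linarith
  set N : ℝ := Real.sqrt (∑ j ∈ G g, (βk1 j) ^ 2) with hN
  have hNpos : 0 < N := Real.sqrt_pos.2 hQpos
  have hcardpos : 0 < Real.sqrt ((G g).card) := by
    have : 0 < ((G g).card : ℝ) := by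
      exact_mod_cast Finset.card_pos.2 ⟨i, hi⟩
    exact Real.sqrt_pos.2 this
  -- coordinate derivatives
  have hcoord : ∀ j : Fin p, HasDerivAt (fun t : ℝ => βk1 j + t * u j) (u j) 0 := by
    intro j
    simpa using ((hasDerivAt_id (0:ℝ)).mul_const (u j)).const_add (βk1 j)
  -- derivative of the absolute value term
  obtain ⟨s, hsd, hsa, hs1⟩ : ∃ s : ℝ, HasDerivAt (fun t : ℝ => |βk1 i + t * u i|) s 0
      ∧ s * βk1 i = |βk1 i| ∧ |s| = 1 := by
    have hinner : HasDerivAt (fun t : ℝ => βk1 i + t * u i) 1 0 := by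
      simpa [hui] using hcoord i
    rcases lt_or_gt_of_ne hne with hlt | hgt
    · refine ⟨-1, ?_, by rw [abs_of_neg hlt]; ring, by norm_num⟩
      have hpt : βk1 i + 0 * u i < 0 := by simpa using hlt
      have := (hasDerivAt_abs_neg hpt).comp 0 hinner
      simpa [Function.comp_def] using this
    · refine ⟨1, ?_, by rw [abs_of_pos hgt]; ring, by norm_num⟩
      have hpt : 0 < βk1 i + 0 * u i := by simpa using hgt
      have := (hasDerivAt_abs_pos hpt).comp 0 hinner
      simpa [Function.comp_def] using this
  -- derivative of the lasso part
  have hterm1 : HasDerivAt (fun t : ℝ => ∑ j, v j * |βk1 j + t * u j|) (v i * s) 0 := by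
    have h1 : ∀ j : Fin p, HasDerivAt (fun t : ℝ => v j * |βk1 j + t * u j|)
        (if j = i then v j * s else 0) 0 := by
      intro j
      by_cases hj : j = i
      · subst hj
        rw [if_pos rfl]
        exact hsd.const_mul (v j)
      · simp only [if_neg hj]
        have hfun : (fun t : ℝ => v j * |βk1 j + t * u j|) = fun _ => v j * |βk1 j| := by
          funext t; rw [hujz j hj, mul_zero, add_zero]
        rw [hfun]
        exact hasDerivAt_const _ _
    have := HasDerivAt.fun_sum (fun j (_ : j ∈ Finset.univ) => h1 j)
    simpa using this
  -- derivative of the group-lasso part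
  have hterm2 : HasDerivAt
      (fun t : ℝ => ∑ g' : Fin m, w g' * Real.sqrt ((G g').card) *
          Real.sqrt (∑ j ∈ G g', (βk1 j + t * u j) ^ 2))
      (w g * Real.sqrt ((G g).card) * (βk1 i / N)) 0 := by
    have h2 : ∀ g' : Fin m, HasDerivAt
        (fun t : ℝ => w g' * Real.sqrt ((G g').card) *
            Real.sqrt (∑ j ∈ G g', (βk1 j + t * u j) ^ 2))
        (if g' = g then w g' * Real.sqrt ((G g').card) * (βk1 i / N) else 0) 0 := by
      intro g'
      by_cases hg' : g' = g
      · subst hg'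
        rw [if_pos rfl]
        have hsq : ∀ j : Fin p, HasDerivAt (fun t : ℝ => (βk1 j + t * u j) ^ 2)
            (if j = i then 2 * βk1 i else 0) 0 := by
          intro j
          by_cases hj : j = i
          · subst hj
            rw [if_pos rfl]
            have h := (hcoord j).fun_pow 2
            refine h.congr_deriv ?_
            simp [hui]
          · simp only [if_neg hj]
            have hfun : (fun t : ℝ => (βk1 j + t * u j) ^ 2) = fun _ => (βk1 j) ^ 2 := by
              funext t; rw [hujz j hj, mul_zero, add_zero]
            rw [hfun]
            exact hasDerivAt_const _ _
        have hq : HasDerivAt (fun t : ℝ => ∑ j ∈ G g', (βk1 j + t * u j) ^ 2)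
            (2 * βk1 i) 0 := by
          have := HasDerivAt.fun_sum (fun j (_ : j ∈ G g') => hsq j)
          simpa [Finset.sum_ite_eq', hi] using this
        have hval : (∑ j ∈ G g', (βk1 j + (0:ℝ) * u j) ^ 2) ≠ 0 := by
          simp only [zero_mul, add_zero]
          exact hQpos.ne'
        have h3 := (hq.sqrt hval).const_mul (w g' * Real.sqrt ((G g').card))
        have heq2 : 2 * βk1 i / (2 * Real.sqrt (∑ j ∈ G g', (βk1 j + (0:ℝ) * u j) ^ 2))
            = βk1 i / N := by
          simp only [zero_mul, add_zero]
          rw [hN, mul_div_mul_left _ _ (two_ne_zero)]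
        rw [heq2] at h3
        exact h3
      · have hig' : i ∉ G g' := fun hmem => hg' ((hpart i).unique hmem hi)
        simp only [if_neg hg']
        have hfun : (fun t : ℝ => w g' * Real.sqrt ((G g').card) *
            Real.sqrt (∑ j ∈ G g', (βk1 j + t * u j) ^ 2))
            = fun _ => w g' * Real.sqrt ((G g').card) *
                Real.sqrt (∑ j ∈ G g', (βk1 j) ^ 2) := by
          funext t
          congr 2
          refine Finset.sum_congr rfl fun j hj => ?_
          rw [hujz j (fun h => hig' (h ▸ hj)), mul_zero, add_zero]
        rw [hfun]
        exact hasDerivAt_const _ _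
    have := HasDerivAt.fun_sum (fun g' (_ : g' ∈ Finset.univ) => h2 g')
    simpa using this
  -- derivative of the smooth part
  have hline : HasDerivAt (fun t : ℝ => βk1 + t • u) u 0 := by
    simpa using ((hasDerivAt_id (0:ℝ)).smul_const u).const_add βk1
  have hF : HasDerivAt (fun t : ℝ => f (βk1 + t • u)) (fderiv ℝ f βk1 u) 0 := by
    have hff : HasFDerivAt f (fderiv ℝ f βk1) (βk1 + (0:ℝ) • u) := by
      rw [h0]; exact (hdiff βk1).hasFDerivAt
    have := hff.comp_hasDerivAt 0 hline
    simpa [Function.comp_def] using this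
  -- the objective along the line
  set E : ℝ := α * (v i * s) + (1 - α) * (w g * Real.sqrt ((G g).card) * (βk1 i / N))
    with hE
  have hder : HasDerivAt (fun t : ℝ => f (βk1 + t • u) + lamk1 *
      (α * ∑ j, v j * |βk1 j + t * u j| +
        (1 - α) * ∑ g' : Fin m, w g' * Real.sqrt ((G g').card) *
          Real.sqrt (∑ j ∈ G g', (βk1 j + t * u j) ^ 2)))
      (fderiv ℝ f βk1 u + lamk1 * E) 0 :=
    hF.add (((hterm1.const_mul α).add (hterm2.const_mul (1 - α))).const_mul lamk1)
  have hmin : IsLocalMin (fun t : ℝ => f (βk1 + t • u) + lamk1 *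
      (α * ∑ j, v j * |βk1 j + t * u j| +
        (1 - α) * ∑ g' : Fin m, w g' * Real.sqrt ((G g').card) *
          Real.sqrt (∑ j ∈ G g', (βk1 j + t * u j) ^ 2))) 0 := by
    apply Filter.Eventually.of_forall
    intro t
    have hrw : ∀ r : ℝ, f (βk1 + r • u) + lamk1 *
        (α * ∑ j, v j * |βk1 j + r * u j| +
          (1 - α) * ∑ g' : Fin m, w g' * Real.sqrt ((G g').card) *
            Real.sqrt (∑ j ∈ G g', (βk1 j + r * u j) ^ 2))
        = f (βk1 + r • u) + lamk1 * asglNorm G α v w (βk1 + r • u) := by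
      intro r
      simp [asglNorm]
    simp only [hrw]
    rw [h0]
    exact hmink1 _
  have hzero : fderiv ℝ f βk1 u + lamk1 * E = 0 := hmin.hasDerivAt_eq_zero hder
  -- final contradiction
  set D : ℝ := fderiv ℝ f βk1 u with hD
  set Dk : ℝ := fderiv ℝ f βk u with hDk
  have hDle : |D| ≤ α * v i * lamk1 := by
    have h1 : |D| ≤ |D - Dk| + |Dk| := by
      calc |D| = |(D - Dk) + Dk| := by ring_nf
        _ ≤ |D - Dk| + |Dk| := abs_add_le _ _
    have := hlip
    have := hscreen
    linarith
  have hs2 : s ^ 2 = 1 := by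
    rw [← sq_abs, hs1]; norm_num
  have hposterm : 0 < (1 - α) * (w g * Real.sqrt ((G g).card)) * |βk1 i| / N := by
    apply div_pos _ hNpos
    have h1α : 0 < 1 - α := by linarith
    have habs : 0 < |βk1 i| := abs_pos.2 hne
    exact mul_pos (mul_pos h1α (mul_pos (hw g) hcardpos)) habs
  have hsE : s * E = α * v i + (1 - α) * (w g * Real.sqrt ((G g).card)) * |βk1 i| / N := by
    rw [hE]
    have : s * (α * (v i * s) + (1 - α) * (w g * Real.sqrt ((G g).card) * (βk1 i / N)))
        = α * v i * s ^ 2 + (1 - α) * (w g * Real.sqrt ((G g).card)) * (s * βk1 i) / N := by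
      ring
    rw [this, hs2, hsa]
    ring
  have hEabs : s * E ≤ |E| := by
    calc s * E ≤ |s * E| := le_abs_self _
      _ = |s| * |E| := abs_mul _ _
      _ = |E| := by rw [hs1, one_mul]
  have hDE : |D| = lamk1 * |E| := by
    have hDeq : D = -(lamk1 * E) := by linarith
    rw [hDeq, abs_neg, abs_mul, abs_of_pos hpos]
  have hEle : |E| ≤ α * v i := by
    rw [hDE] at hDle
    nlinarith
  clear_value E N D Dk
  linarith [hposterm, hsE, hEabs, hEle]
end

section
/- (aSGL group first-order inactivity condition: precise form of the theoretical aSGL group screening rule.) Let β̂ be a minimizer of β ↦ f(β) + λ‖β‖_asgl over ℝ^p, where f : ℝ^p → ℝ is convex and differentiable, λ > 0, with weights v_i ≥ 0 and w_g ≥ 0. For any group g: (i) if β̂^{(g)} = 0, then ‖S(∇_g f(β̂), λ α v^{(g)})‖₂ ≤ λ(1−α) w_g √p_g, where S is applied coordinatewise with thresholds λ α v_i; (ii) conversely, if ‖S(∇_g f(β̂), λ α v^{(g)})‖₂ < λ(1−α) w_g √p_g, then β̂^{(g)} = 0. -/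
open scoped BigOperators

lemma softThresh_abs {a b : ℝ} (hb : 0 ≤ b) : |softThresh a b| = max (|a| - b) 0 := by
  unfold softThresh
  rcases lt_trichotomy a 0 with h | h | h
  · rw [Real.sign_of_neg h, abs_mul, abs_of_nonneg (le_max_right (|a| - b) 0)]; norm_num
  · subst h
    rw [Real.sign_zero, zero_mul, abs_zero, eq_comm, max_eq_right]
    simp; linarith
  · rw [Real.sign_of_pos h, abs_mul, abs_of_nonneg (le_max_right (|a| - b) 0)]; norm_num

lemma mul_softThresh {a b : ℝ} (hb : 0 ≤ b) :
    a * softThresh a b = softThresh a b ^ 2 + b * |softThresh a b| := by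
  rw [softThresh_abs hb]
  unfold softThresh
  rcases le_or_gt (|a|) b with h | h
  · rw [max_eq_right (by linarith)]; ring
  · rw [max_eq_left (by linarith)]
    rcases lt_trichotomy a 0 with h' | h' | h'
    · rw [Real.sign_of_neg h', abs_of_neg h']; ring
    · subst h'; simp at h; linarith
    · rw [Real.sign_of_pos h', abs_of_pos h']; ring

lemma abs_le_softThresh {a b : ℝ} (hb : 0 ≤ b) : |a| ≤ |softThresh a b| + b := by
  rw [softThresh_abs hb]
  rcases le_or_gt (|a|) b with h | h
  · rw [max_eq_right (by linarith)]; linarith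
  · rw [max_eq_left (by linarith)]; linarith

lemma clm_apply_eq_sum {p : ℕ} (L : (Fin p → ℝ) →L[ℝ] ℝ) (d : Fin p → ℝ) :
    L d = ∑ i, d i * L (Pi.single i 1) := by
  have hd : d = ∑ i, d i • (Pi.single i 1 : Fin p → ℝ) := by
    funext j
    rw [Finset.sum_apply]
    simp [Pi.single_apply]
  nth_rewrite 1 [hd]
  rw [map_sum]
  simp [smul_eq_mul]

lemma keyA {p : ℕ} {f : (Fin p → ℝ) → ℝ} (hdiff : Differentiable ℝ f)
    {N : (Fin p → ℝ) → ℝ} {lam : ℝ} (hlam : 0 < lam) {βhat : Fin p → ℝ}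
    (hmin : ∀ b, f βhat + lam * N βhat ≤ f b + lam * N b)
    (d : Fin p → ℝ) (C : ℝ)
    (hN : ∀ t ∈ Set.Ioc (0:ℝ) 1, N (βhat + t • d) ≤ N βhat + t * C) :
    -(lam * C) ≤ fderiv ℝ f βhat d := by
  have hline : HasDerivAt (fun t : ℝ => βhat + t • d) d 0 := by
    simpa using ((hasDerivAt_id (0:ℝ)).smul_const d).const_add βhat
  have hg : HasDerivAt (fun t : ℝ => f (βhat + t • d)) (fderiv ℝ f βhat d) 0 := by
    have h1 : HasFDerivAt f (fderiv ℝ f βhat) (βhat + (0:ℝ) • d) := by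
      simpa using (hdiff βhat).hasFDerivAt
    exact h1.comp_hasDerivAt 0 hline
  have hslope := hasDerivAt_iff_tendsto_slope.1 hg
  have h2 : Filter.Tendsto (slope (fun t : ℝ => f (βhat + t • d)) 0) (nhdsWithin 0 (Set.Ioi 0))
      (nhds (fderiv ℝ f βhat d)) :=
    hslope.mono_left (nhdsWithin_mono _ (fun x hx => ne_of_gt hx))
  refine ge_of_tendsto h2 ?_
  filter_upwards [Ioc_mem_nhdsGT_of_mem (Set.mem_Ico.2 ⟨le_refl 0, zero_lt_one⟩)] with t ht
  have ht0 : (0:ℝ) < t := ht.1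
  rw [slope_def_field]
  have h3 := hmin (βhat + t • d)
  have h4 := hN t ht
  have h5 : -(lam * C) * t ≤ f (βhat + t • d) - f βhat := by nlinarith
  rw [le_div_iff₀ (by simpa using ht0)]
  simpa using h5

lemma asgl_diff {p m : ℕ} (G : Fin m → Finset (Fin p))
    (hdisj : ∀ (i : Fin p) (g1 g2 : Fin m), i ∈ G g1 → i ∈ G g2 → g1 = g2)
    (α : ℝ) (v : Fin p → ℝ) (w : Fin m → ℝ) (g : Fin m) (β b : Fin p → ℝ)
    (hb : ∀ i, i ∉ G g → b i = β i) :
    asglNorm G α v w b = asglNorm G α v w β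
      + α * (∑ i ∈ G g, v i * |b i| - ∑ i ∈ G g, v i * |β i|)
      + (1 - α) * (w g * Real.sqrt ((G g).card) *
          (Real.sqrt (∑ i ∈ G g, (b i) ^ 2) - Real.sqrt (∑ i ∈ G g, (β i) ^ 2))) := by
  have hA : ∑ i, v i * |b i|
      = ∑ i, v i * |β i| + (∑ i ∈ G g, v i * |b i| - ∑ i ∈ G g, v i * |β i|) := by
    rw [← Finset.sum_sdiff (Finset.subset_univ (G g)) (f := fun i => v i * |b i|),
        ← Finset.sum_sdiff (Finset.subset_univ (G g)) (f := fun i => v i * |β i|)]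
    have : ∑ i ∈ Finset.univ \ G g, v i * |b i| = ∑ i ∈ Finset.univ \ G g, v i * |β i| :=
      Finset.sum_congr rfl fun i hi => by
        rw [hb i (Finset.mem_sdiff.1 hi).2]
    rw [this]; ring
  have hB : ∑ g', w g' * Real.sqrt ((G g').card) * Real.sqrt (∑ i ∈ G g', (b i) ^ 2)
      = ∑ g', w g' * Real.sqrt ((G g').card) * Real.sqrt (∑ i ∈ G g', (β i) ^ 2)
        + (w g * Real.sqrt ((G g).card) *
          (Real.sqrt (∑ i ∈ G g, (b i) ^ 2) - Real.sqrt (∑ i ∈ G g, (β i) ^ 2))) := by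
    rw [← Finset.add_sum_erase Finset.univ _ (Finset.mem_univ g),
        ← Finset.add_sum_erase Finset.univ
          (fun g' => w g' * Real.sqrt ((G g').card) * Real.sqrt (∑ i ∈ G g', (β i) ^ 2))
          (Finset.mem_univ g)]
    have : ∑ g' ∈ Finset.univ.erase g, w g' * Real.sqrt ((G g').card)
            * Real.sqrt (∑ i ∈ G g', (b i) ^ 2)
        = ∑ g' ∈ Finset.univ.erase g, w g' * Real.sqrt ((G g').card)
            * Real.sqrt (∑ i ∈ G g', (β i) ^ 2) := by
      refine Finset.sum_congr rfl fun g' hg' => ?_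
      have hne : g' ≠ g := Finset.ne_of_mem_erase hg'
      have : ∑ i ∈ G g', (b i) ^ 2 = ∑ i ∈ G g', (β i) ^ 2 :=
        Finset.sum_congr rfl fun i hi => by
          rw [hb i (fun hig => hne (hdisj i g' g hi hig))]
      rw [this]
    rw [this]; ring
  unfold asglNorm
  rw [hA, hB]; ring

/-- aSGL group first-order inactivity condition: a group is inactive at a minimizer iff
`‖S(∇_g f(β̂), λαv^{(g)})‖₂ ≤ λ(1-α)w_g√p_g`, with strict inequality certifying inactivity. -/
theorem asgl_group_first_order
    {p m : ℕ} (G : Fin m → Finset (Fin p))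
    (hpart : ∀ i : Fin p, ∃! g : Fin m, i ∈ G g)
    (α : ℝ) (hα : α ∈ Set.Icc (0:ℝ) 1)
    (v : Fin p → ℝ) (hv : ∀ i, 0 ≤ v i)
    (w : Fin m → ℝ) (hw : ∀ g, 0 ≤ w g)
    (f : (Fin p → ℝ) → ℝ)
    (hconv : ConvexOn ℝ Set.univ f) (hdiff : Differentiable ℝ f)
    (lam : ℝ) (hlam : 0 < lam)
    (βhat : Fin p → ℝ)
    (hmin : ∀ b : Fin p → ℝ,
      f βhat + lam * asglNorm G α v w βhat ≤ f b + lam * asglNorm G α v w b)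
    (g : Fin m) :
    ((∀ i ∈ G g, βhat i = 0) →
      Real.sqrt (∑ i ∈ G g,
          (softThresh (fderiv ℝ f βhat (Pi.single i 1)) (lam * α * v i)) ^ 2)
        ≤ lam * (1 - α) * w g * Real.sqrt ((G g).card)) ∧
    (Real.sqrt (∑ i ∈ G g,
          (softThresh (fderiv ℝ f βhat (Pi.single i 1)) (lam * α * v i)) ^ 2)
        < lam * (1 - α) * w g * Real.sqrt ((G g).card) →
      ∀ i ∈ G g, βhat i = 0) := by
  have hα0 : 0 ≤ α := hα.1
  have hα1 : α ≤ 1 := hα.2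
  have hdisj : ∀ (i : Fin p) (g1 g2 : Fin m), i ∈ G g1 → i ∈ G g2 → g1 = g2 := by
    intro i g1 g2 h1 h2
    obtain ⟨g0, _, hu⟩ := hpart i
    rw [hu g1 h1, hu g2 h2]
  set D : Fin p → ℝ := fun i => fderiv ℝ f βhat (Pi.single i 1) with hD
  set S : Fin p → ℝ := fun i => softThresh (D i) (lam * α * v i) with hS
  have hthr : ∀ i, 0 ≤ lam * α * v i := fun i => mul_nonneg (mul_nonneg hlam.le hα0) (hv i)
  set r : ℝ := Real.sqrt (∑ i ∈ G g, S i ^ 2) with hr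
  set K : ℝ := lam * (1 - α) * w g * Real.sqrt ((G g).card) with hK
  have hsumS : 0 ≤ ∑ i ∈ G g, S i ^ 2 := Finset.sum_nonneg fun i _ => sq_nonneg _
  have hr0 : 0 ≤ r := Real.sqrt_nonneg _
  have hr2 : r ^ 2 = ∑ i ∈ G g, S i ^ 2 := Real.sq_sqrt hsumS
  have hK0 : 0 ≤ K :=
    mul_nonneg (mul_nonneg (mul_nonneg hlam.le (by linarith)) (hw g)) (Real.sqrt_nonneg _)
  constructor
  · -- Part (i)
    intro hz
    set d : Fin p → ℝ := fun i => if i ∈ G g then -(S i) else 0 with hd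
    have hdoff : ∀ i, i ∉ G g → d i = 0 := fun i hi => by simp [hd, hi]
    have hC1 : ∀ t ∈ Set.Ioc (0:ℝ) 1,
        asglNorm G α v w (βhat + t • d) ≤ asglNorm G α v w βhat
          + t * (α * ∑ i ∈ G g, v i * |S i| + (1 - α) * (w g * Real.sqrt ((G g).card) * r)) := by
      intro t ht
      have ht0 : (0:ℝ) < t := ht.1
      have hboff : ∀ i, i ∉ G g → (βhat + t • d) i = βhat i := by
        intro i hi
        simp [hdoff i hi]
      rw [asgl_diff G hdisj α v w g βhat _ hboff]
      have hbon : ∀ i ∈ G g, (βhat + t • d) i = -(t * S i) := by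
        intro i hi
        simp [hd, hi, hz i hi]
      have e1 : ∑ i ∈ G g, v i * |(βhat + t • d) i| = t * ∑ i ∈ G g, v i * |S i| := by
        rw [Finset.mul_sum]
        refine Finset.sum_congr rfl fun i hi => ?_
        rw [hbon i hi, abs_neg, abs_mul, abs_of_pos ht0]
        ring
      have e2 : ∑ i ∈ G g, v i * |βhat i| = 0 :=
        Finset.sum_eq_zero fun i hi => by rw [hz i hi]; simp
      have e3 : ∑ i ∈ G g, ((βhat + t • d) i) ^ 2 = t ^ 2 * ∑ i ∈ G g, S i ^ 2 := by
        rw [Finset.mul_sum]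
        refine Finset.sum_congr rfl fun i hi => ?_
        rw [hbon i hi]
        ring
      have e4 : ∑ i ∈ G g, (βhat i) ^ 2 = 0 :=
        Finset.sum_eq_zero fun i hi => by rw [hz i hi]; simp
      rw [e1, e2, e3, e4, Real.sqrt_zero, Real.sqrt_mul (sq_nonneg t),
        Real.sqrt_sq ht0.le, ← hr]
      exact le_of_eq (by ring)
    have hkey := keyA hdiff hlam hmin d
      (α * ∑ i ∈ G g, v i * |S i| + (1 - α) * (w g * Real.sqrt ((G g).card) * r)) hC1
    have hfd : fderiv ℝ f βhat d = ∑ i ∈ G g, (-(S i)) * D i := by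
      rw [clm_apply_eq_sum]
      rw [← Finset.sum_subset (Finset.subset_univ (G g))
        (fun i _ hi => by simp [hd, hi])]
      exact Finset.sum_congr rfl fun i hi => by simp [hd, hi, hD]
    rw [hfd] at hkey
    have hsum_neg : ∑ i ∈ G g, (-(S i)) * D i = -∑ i ∈ G g, S i * D i := by
      rw [← Finset.sum_neg_distrib]
      exact Finset.sum_congr rfl fun i _ => by ring
    rw [hsum_neg] at hkey
    have h7 : ∑ i ∈ G g, S i * D i
        = (∑ i ∈ G g, S i ^ 2) + lam * α * ∑ i ∈ G g, v i * |S i| := by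
      rw [show ∑ i ∈ G g, S i * D i
            = ∑ i ∈ G g, (S i ^ 2 + lam * α * v i * |S i|) from
          Finset.sum_congr rfl fun i _ => by
            rw [mul_comm (S i) (D i)]
            exact mul_softThresh (hthr i),
        Finset.sum_add_distrib]
      congr 1
      rw [Finset.mul_sum]
      exact Finset.sum_congr rfl fun i _ => by ring
    have h8 : r ^ 2 ≤ K * r := by
      rw [hr2]
      have hkey' : ∑ i ∈ G g, S i * D i
          ≤ lam * (α * ∑ i ∈ G g, v i * |S i|
            + (1 - α) * (w g * Real.sqrt ((G g).card) * r)) := by linarith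
      rw [h7] at hkey'
      have : lam * (α * ∑ i ∈ G g, v i * |S i|
            + (1 - α) * (w g * Real.sqrt ((G g).card) * r))
          = lam * α * ∑ i ∈ G g, v i * |S i| + K * r := by rw [hK]; ring
      linarith [hkey'.trans_eq this]
    rcases eq_or_lt_of_le hr0 with h | h
    · rw [← h]; exact hK0
    · nlinarith
  · -- Part (ii)
    intro hlt i0 hi0
    by_contra hne
    set d : Fin p → ℝ := fun i => if i ∈ G g then -(βhat i) else 0 with hd
    set R : ℝ := Real.sqrt (∑ i ∈ G g, (βhat i) ^ 2) with hR
    have hRpos : 0 < R :=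
      Real.sqrt_pos.2 (Finset.sum_pos'
        (fun i _ => sq_nonneg _) ⟨i0, hi0, by positivity⟩)
    have hC2 : ∀ t ∈ Set.Ioc (0:ℝ) 1,
        asglNorm G α v w (βhat + t • d) ≤ asglNorm G α v w βhat
          + t * (-(α * ∑ i ∈ G g, v i * |βhat i|
              + (1 - α) * (w g * Real.sqrt ((G g).card) * R))) := by
      intro t ht
      have ht0 : (0:ℝ) < t := ht.1
      have ht1 : (0:ℝ) ≤ 1 - t := by linarith [ht.2]
      have hboff : ∀ i, i ∉ G g → (βhat + t • d) i = βhat i := by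
        intro i hi
        simp [hd, hi]
      rw [asgl_diff G hdisj α v w g βhat _ hboff]
      have hbon : ∀ i ∈ G g, (βhat + t • d) i = (1 - t) * βhat i := by
        intro i hi
        simp [hd, hi]
        ring
      have e1 : ∑ i ∈ G g, v i * |(βhat + t • d) i|
          = (1 - t) * ∑ i ∈ G g, v i * |βhat i| := by
        rw [Finset.mul_sum]
        refine Finset.sum_congr rfl fun i hi => ?_
        rw [hbon i hi, abs_mul, abs_of_nonneg ht1]
        ring
      have e3 : ∑ i ∈ G g, ((βhat + t • d) i) ^ 2
          = (1 - t) ^ 2 * ∑ i ∈ G g, (βhat i) ^ 2 := by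
        rw [Finset.mul_sum]
        refine Finset.sum_congr rfl fun i hi => ?_
        rw [hbon i hi]
        ring
      rw [e1, e3, Real.sqrt_mul (sq_nonneg (1 - t)), Real.sqrt_sq ht1, ← hR]
      exact le_of_eq (by ring)
    have hkey := keyA hdiff hlam hmin d
      (-(α * ∑ i ∈ G g, v i * |βhat i|
          + (1 - α) * (w g * Real.sqrt ((G g).card) * R))) hC2
    have hfd : fderiv ℝ f βhat d = ∑ i ∈ G g, (-(βhat i)) * D i := by
      rw [clm_apply_eq_sum]
      rw [← Finset.sum_subset (Finset.subset_univ (G g))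
        (fun i _ hi => by simp [hd, hi])]
      exact Finset.sum_congr rfl fun i hi => by simp [hd, hi, hD]
    rw [hfd] at hkey
    have hub : ∑ i ∈ G g, (-(βhat i)) * D i
        ≤ R * r + lam * α * ∑ i ∈ G g, v i * |βhat i| := by
      have s1 : ∑ i ∈ G g, (-(βhat i)) * D i
          ≤ ∑ i ∈ G g, |βhat i| * (|S i| + lam * α * v i) := by
        refine Finset.sum_le_sum fun i hi => ?_
        calc (-(βhat i)) * D i ≤ |(-(βhat i)) * D i| := le_abs_self _
          _ = |βhat i| * |D i| := by rw [abs_mul, abs_neg]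
          _ ≤ |βhat i| * (|S i| + lam * α * v i) :=
            mul_le_mul_of_nonneg_left (abs_le_softThresh (hthr i)) (abs_nonneg _)
      have s2 : ∑ i ∈ G g, |βhat i| * (|S i| + lam * α * v i)
          = (∑ i ∈ G g, |βhat i| * |S i|) + lam * α * ∑ i ∈ G g, v i * |βhat i| := by
        rw [show ∑ i ∈ G g, |βhat i| * (|S i| + lam * α * v i)
              = ∑ i ∈ G g, (|βhat i| * |S i| + lam * α * (v i * |βhat i|)) from
            Finset.sum_congr rfl fun i _ => by ring,
          Finset.sum_add_distrib, Finset.mul_sum]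
      have s3 : ∑ i ∈ G g, |βhat i| * |S i| ≤ R * r := by
        have := Real.sum_mul_le_sqrt_mul_sqrt (G g)
          (fun i => |βhat i|) (fun i => |S i|)
        simpa [sq_abs, ← hR, ← hr] using this
      linarith
    have hlb : lam * α * ∑ i ∈ G g, v i * |βhat i| + K * R
        ≤ ∑ i ∈ G g, (-(βhat i)) * D i := by
      have : -(lam * (-(α * ∑ i ∈ G g, v i * |βhat i|
          + (1 - α) * (w g * Real.sqrt ((G g).card) * R))))
          = lam * α * ∑ i ∈ G g, v i * |βhat i| + K * R := by rw [hK]; ring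
      linarith [hkey, this.symm.le]
    nlinarith
end
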